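/- arXiv:2401.06677 — 7 statements merged into one kernel-verified Lean document; each statement's English description precedes it below -/
import Mathlib

section
/- Let f, g : ℝ → ℝ be C^∞, let u_- < u_+ satisfy g(u_-) = g(u_+) = 0, g'(u_-) < 0 < g'(u_+), and g(v) ≠ 0 for every v ∈ (u_-, u_+), and let σ ∈ ℝ satisfy σ > f'(v) for every v ∈ [u_-, u_+]. Then there is a unique ū ∈ C^1(ℝ;ℝ) with ū(0) = (u_- + u_+)/2 and ū'(x) = g(ū(x))/(f'(ū(x)) − σ) for all x ∈ ℝ; this ū is strictly increasing, takes values in (u_-, u_+), and satisfies ū(x) → u_- as x → −∞ and ū(x) → u_+ as x → +∞. Moreover, every ũ ∈ C^1(ℝ;ℝ) solving the same ODE on all of ℝ with ũ(x) → u_- as x → −∞ and ũ(x) → u_+ as x → +∞ equals ū(· + x_0) for some x_0 ∈ ℝ. -/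
open Filter Set
open scoped Topology NNReal

/-!
The profile equation is autonomous, `ū' = h ū` with `h = g / (f' - σ)`, and `h > 0` on
`(u₋, u₊)`: `g` has no zero there and `g'(u₊) > 0`, so `g < 0`, while `f' - σ < 0`.
Hence the profile through the midpoint `c` is the inverse of the strictly increasing time map
`F v = ∫_c^v 1/h`. Since `g` is Lipschitz and vanishes at `u∓`, `1/h ≥ k/(v - u₋)` and
`1/h ≥ k/(u₊ - v)`, so `F` diverges logarithmically to `∓∞` at `u∓`; its inverse is therefore
defined on all of `ℝ` and sweeps out `(u₋, u₊)`. Uniqueness, and the fact that every orbit with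
these limits is a translate, follow from local uniqueness for the `C¹` field `h`, since such an
orbit crosses the midpoint.
-/

theorem Monotone.continuous_of_isOpen_range {α β : Type*} [LinearOrder α] [TopologicalSpace α]
    [OrderTopology α] [LinearOrder β] [TopologicalSpace β] [OrderTopology β] [DenselyOrdered β]
    {u : α → β} (hu : Monotone u)
    (hrange : IsOpen (range u)) : Continuous u :=
  continuous_iff_continuousAt.2 fun x =>
    continuousAt_of_monotoneOn_of_image_mem_nhds (hu.monotoneOn univ) univ_mem
      (by rw [image_univ]; exact hrange.mem_nhds (mem_range_self x))

theorem hasDerivAt_integral_of_continuousOn_Ioo {q : ℝ → ℝ} {a b c v : ℝ}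
    (hq : ContinuousOn q (Ioo a b)) (hc : c ∈ Ioo a b) (hv : v ∈ Ioo a b) :
    HasDerivAt (fun v => ∫ t in c..v, q t) (q v) v :=
  intervalIntegral.integral_hasDerivAt_right
    ((hq.mono (ordConnected_Ioo.uIcc_subset hc hv)).intervalIntegrable)
    (hq.stronglyMeasurableAtFilter isOpen_Ioo v hv) (hq.continuousAt (isOpen_Ioo.mem_nhds hv))

theorem tendsto_nhdsGT_atBot_of_div_sub_le_deriv {F F' : ℝ → ℝ} {a c k : ℝ} (hk : 0 < k)
    (hac : a < c) (hF : ∀ v ∈ Ioo a c, HasDerivAt F (F' v) v)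
    (hF' : ∀ v ∈ Ioo a c, k / (v - a) ≤ F' v) : Tendsto F (𝓝[>] a) atBot := by
  obtain ⟨d, hd⟩ := nonempty_Ioo.2 hac
  have hlog : ∀ v ∈ Ioo a c, HasDerivAt (fun v => k * Real.log (v - a)) (k / (v - a)) v := by
    intro v hv
    simpa [div_eq_mul_inv] using
      (((hasDerivAt_id v).sub_const a).log (sub_pos.2 hv.1).ne').const_mul k
  have hmono : MonotoneOn (fun v => F v - k * Real.log (v - a)) (Ioo a c) := by
    refine monotoneOn_of_hasDerivWithinAt_nonneg (f' := fun v => F' v - k / (v - a))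
      (convex_Ioo a c)
      (fun v hv => ((hF v hv).sub (hlog v hv)).continuousAt.continuousWithinAt) ?_ ?_
    · rw [interior_Ioo]
      exact fun v hv => ((hF v hv).sub (hlog v hv)).hasDerivWithinAt
    · rw [interior_Ioo]
      exact fun v hv => sub_nonneg.2 (hF' v hv)
  have hlim : Tendsto (fun v => F d - k * Real.log (d - a) + k * Real.log (v - a))
      (𝓝[>] a) atBot :=
    tendsto_atBot_add_const_left _ _ <| Tendsto.const_mul_atBot hk <|
      Real.tendsto_log_nhdsGT_zero.comp (sub_self a ▸ map_subRight_nhdsGT (c := a) (a := a)).le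
  refine tendsto_atBot_mono' _ ?_ hlim
  filter_upwards [Ioo_mem_nhdsGT hd.1] with v hv
  have := hmono ⟨hv.1, hv.2.trans hd.2⟩ hd hv.2.le
  simp only at this
  linarith

theorem tendsto_nhdsLT_atTop_of_div_sub_le_deriv {F F' : ℝ → ℝ} {b c k : ℝ} (hk : 0 < k)
    (hcb : c < b) (hF : ∀ v ∈ Ioo c b, HasDerivAt F (F' v) v)
    (hF' : ∀ v ∈ Ioo c b, k / (b - v) ≤ F' v) : Tendsto F (𝓝[<] b) atTop := by
  have hrefl : Tendsto (fun v => -F (-v)) (𝓝[>] (-b)) atBot := by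
    refine tendsto_nhdsGT_atBot_of_div_sub_le_deriv (F' := fun v => F' (-v)) hk (neg_lt_neg hcb)
      (fun v hv => ?_) (fun v hv => ?_)
    · have hv' : -v ∈ Ioo c b := ⟨lt_neg_of_lt_neg hv.2, neg_lt.1 hv.1⟩
      simpa using ((hF (-v) hv').comp v (hasDerivAt_neg v)).fun_neg
    · have hv' : -v ∈ Ioo c b := ⟨lt_neg_of_lt_neg hv.2, neg_lt.1 hv.1⟩
      simpa [sub_eq_add_neg, add_comm] using hF' (-v) hv'
  simpa [Function.comp_def] using tendsto_neg_atBot_atTop.comp (hrefl.comp tendsto_neg_nhdsLT)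

theorem contDiff_one_of_hasDerivAt_comp {E : Type*} [NormedAddCommGroup E] [NormedSpace ℝ E]
    {h : E → E} {u : ℝ → E} {s : Set E} (hh : ContinuousOn h s)
    (hu : ∀ x, HasDerivAt u (h (u x)) x) (hmem : ∀ x, u x ∈ s) : ContDiff ℝ 1 u := by
  have hcont : Continuous u := continuous_iff_continuousAt.2 fun x => (hu x).continuousAt
  refine contDiff_one_iff_deriv.2 ⟨fun x => (hu x).differentiableAt, ?_⟩
  rw [show deriv u = h ∘ u from funext fun x => (hu x).deriv]
  exact hh.comp_continuous hcont hmem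

theorem exists_strictMono_hasDerivAt_of_tendsto_integral_inv {h : ℝ → ℝ} {a b c : ℝ}
    (hc : c ∈ Ioo a b) (hh : ContinuousOn h (Ioo a b)) (hpos : ∀ v ∈ Ioo a b, 0 < h v)
    (hbot : Tendsto (fun v => ∫ t in c..v, (h t)⁻¹) (𝓝[>] a) atBot)
    (htop : Tendsto (fun v => ∫ t in c..v, (h t)⁻¹) (𝓝[<] b) atTop) :
    ∃ u : ℝ → ℝ, u 0 = c ∧ StrictMono u ∧ range u = Ioo a b ∧
      ∀ x, HasDerivAt u (h (u x)) x := by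
  set F := fun v => ∫ t in c..v, (h t)⁻¹
  have hF : ∀ v ∈ Ioo a b, HasDerivAt F (h v)⁻¹ v := fun v hv =>
    hasDerivAt_integral_of_continuousOn_Ioo (hh.inv₀ fun v hv => (hpos v hv).ne') hc hv
  have hFcont : ContinuousOn F (Ioo a b) := fun v hv => (hF v hv).continuousAt.continuousWithinAt
  have hFmono : StrictMonoOn F (Ioo a b) := by
    refine strictMonoOn_of_hasDerivWithinAt_pos (f' := fun v => (h v)⁻¹) (convex_Ioo a b) hFcont
      ?_ ?_ <;> rw [interior_Ioo]
    · exact fun v hv => (hF v hv).hasDerivWithinAt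
    · exact fun v hv => inv_pos.2 (hpos v hv)
  have hab : a < b := hc.1.trans hc.2
  have hsurj : SurjOn F (Ioo a b) univ := hFcont.surjOn_of_tendsto (nonempty_Ioo.2 hab)
    ((tendsto_comp_coe_Ioo_atBot hab).2 hbot) ((tendsto_comp_coe_Ioo_atTop hab).2 htop)
  choose u hu huF using fun x => hsurj (mem_univ x)
  have hrange : range u = Ioo a b :=
    (range_subset_iff.2 hu).antisymm fun v hv => ⟨F v, hFmono.injOn (hu _) hv (huF _)⟩
  have hmono : StrictMono u := fun x y hxy =>
    (hFmono.lt_iff_lt (hu x) (hu y)).1 (by rwa [huF, huF])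
  have hcont : Continuous u := hmono.monotone.continuous_of_isOpen_range (hrange ▸ isOpen_Ioo)
  refine ⟨u, hFmono.injOn (hu 0) hc (by simp [huF, F]), hmono, hrange, fun x => ?_⟩
  simpa using HasDerivAt.of_local_left_inverse hcont.continuousAt (hF (u x) (hu x))
    (inv_pos.2 (hpos _ (hu x))).ne' (Eventually.of_forall huF)

theorem eq_of_hasDerivAt_of_contDiffAt {E : Type*} [NormedAddCommGroup E] [NormedSpace ℝ E]
    {h : E → E} {v w : ℝ → E} (hv : ∀ x, HasDerivAt v (h (v x)) x)
    (hw : ∀ x, HasDerivAt w (h (w x)) x) (hh : ∀ x, ContDiffAt ℝ 1 h (v x)) {x₀ : ℝ}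
    (h₀ : w x₀ = v x₀) : w = v := by
  have hv_cont : Continuous v := continuous_iff_continuousAt.2 fun x => (hv x).continuousAt
  have hw_cont : Continuous w := continuous_iff_continuousAt.2 fun x => (hw x).continuousAt
  have hopen : IsOpen {x | w x = v x} := isOpen_iff_mem_nhds.2 fun x (hx : w x = v x) => by
    obtain ⟨K, t, ht, hK⟩ := (hh x).exists_lipschitzOnWith
    exact ODE_solution_unique_of_eventually (v := fun _ => h) (s := fun _ => t)
      (Eventually.of_forall fun _ => hK)
      ((Eventually.of_forall hw).and (hw_cont.continuousAt.preimage_mem_nhds (hx ▸ ht)))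
      ((Eventually.of_forall hv).and (hv_cont.continuousAt.preimage_mem_nhds ht)) hx
  have hall := IsClopen.eq_univ ⟨isClosed_eq hw_cont hv_cont, hopen⟩ ⟨x₀, h₀⟩
  exact funext fun x => (hall ▸ mem_univ x : x ∈ {x | w x = v x})

theorem neg_of_mem_Ioo_of_deriv_pos {g : ℝ → ℝ} {a b : ℝ} (hg : ContinuousOn g (Ioo a b))
    (hgb : g b = 0) (hg'b : 0 < deriv g b) (hne : ∀ v ∈ Ioo a b, g v ≠ 0) :
    ∀ v ∈ Ioo a b, g v < 0 := by
  intro v hv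
  have hsign : ∀ᶠ x in 𝓝[<] b, SignType.sign (g x) = SignType.sign (x - b) ∧ x ∈ Ioo a b :=
    ((eventually_nhdsWithin_sign_eq_of_deriv_pos hg'b hgb).filter_mono nhdsWithin_le_nhds).and
      (Ioo_mem_nhdsLT (hv.1.trans hv.2))
  obtain ⟨w, hsign_w, hw⟩ := hsign.exists
  have hgw : g w < 0 := by
    rw [← sign_eq_neg_one_iff, hsign_w, sign_eq_neg_one_iff, sub_neg]
    exact hw.2
  by_contra! hgv
  obtain ⟨z, hz, hgz⟩ := isPreconnected_Ioo.intermediate_value hw hv hg ⟨hgw.le, hgv⟩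
  exact hne z hz hgz

theorem exists_div_sub_le_div_neg {p g : ℝ → ℝ} {a b : ℝ} {L : ℝ≥0} (hab : a < b)
    (hp : ContinuousOn p (Icc a b)) (hp_pos : ∀ v ∈ Icc a b, 0 < p v)
    (hg : LipschitzOnWith L g (Icc a b)) (hga : g a = 0) (hgb : g b = 0)
    (hg_neg : ∀ v ∈ Ioo a b, g v < 0) :
    ∃ k > 0, ∀ v ∈ Ioo a b, k / (v - a) ≤ p v / -g v ∧ k / (b - v) ≤ p v / -g v := by
  obtain ⟨v₀, hv₀, hmin⟩ := isCompact_Icc.exists_isMinOn (nonempty_Icc.2 hab.le) hp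
  refine ⟨p v₀ / (L + 1), div_pos (hp_pos v₀ hv₀) (by positivity), fun v hv => ?_⟩
  have hvI := Ioo_subset_Icc_self hv
  have hlip : ∀ y ∈ Icc a b, g y = 0 → -g v ≤ (L + 1) * |v - y| := fun y hy hgy => by
    have := hg.dist_le_mul v hvI y hy
    rw [Real.dist_eq, Real.dist_eq, hgy, sub_zero] at this
    nlinarith [neg_le_abs (g v), abs_nonneg (v - y)]
  have hdiv : ∀ d, -g v ≤ (L + 1) * d → p v₀ / (L + 1) / d ≤ p v / -g v := fun d hd => by
    rw [div_div]
    exact div_le_div₀ (hp_pos v hvI).le (hmin hvI) (neg_pos.2 (hg_neg v hv)) hd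
  constructor
  · refine hdiv _ ?_
    simpa [abs_of_pos (sub_pos.2 hv.1)] using hlip a (left_mem_Icc.2 hab.le) hga
  · refine hdiv _ ?_
    simpa [abs_of_neg (sub_neg.2 hv.2)] using hlip b (right_mem_Icc.2 hab.le) hgb

theorem tendsto_integral_inv_div_nhdsGT_nhdsLT {φ g : ℝ → ℝ} {um up σ c : ℝ}
    (hφ : Continuous φ) (hg : ContDiff ℝ 1 g) (hlt : um < up) (hgum : g um = 0)
    (hgup : g up = 0) (hg_neg : ∀ v ∈ Ioo um up, g v < 0)
    (hσ : ∀ v ∈ Icc um up, φ v < σ) (hc : c ∈ Ioo um up) :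
    Tendsto (fun v => ∫ t in c..v, (g t / (φ t - σ))⁻¹) (𝓝[>] um) atBot ∧
      Tendsto (fun v => ∫ t in c..v, (g t / (φ t - σ))⁻¹) (𝓝[<] up) atTop := by
  obtain ⟨L, hL⟩ := hg.locallyLipschitz.locallyLipschitzOn.exists_lipschitzOnWith_of_compact
    (isCompact_Icc (a := um) (b := up))
  obtain ⟨k, hk, hbound⟩ := exists_div_sub_le_div_neg hlt (continuousOn_const.sub hφ.continuousOn)
    (fun v hv => sub_pos.2 (hσ v hv)) hL hgum hgup hg_neg
  have hinv : ∀ v, (σ - φ v) / -g v = (g v / (φ v - σ))⁻¹ := fun v => by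
    rw [inv_div, ← neg_sub, neg_div_neg_eq]
  have hcont : ContinuousOn (fun t => (g t / (φ t - σ))⁻¹) (Ioo um up) := fun t ht => by
    simp only [inv_div]
    exact ((hφ.continuousAt.sub continuousAt_const).div hg.continuous.continuousAt
      (hg_neg t ht).ne).continuousWithinAt
  have hprim := fun v (hv : v ∈ Ioo um up) => hasDerivAt_integral_of_continuousOn_Ioo hcont hc hv
  exact
    ⟨tendsto_nhdsGT_atBot_of_div_sub_le_deriv hk hlt hprim fun v hv => hinv v ▸ (hbound v hv).1,
      tendsto_nhdsLT_atTop_of_div_sub_le_deriv hk hlt hprim fun v hv => hinv v ▸ (hbound v hv).2⟩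

theorem stmt_0_general
    (f g : ℝ → ℝ) (hf : ContDiff ℝ (⊤ : ℕ∞) f) (hg : ContDiff ℝ (⊤ : ℕ∞) g)
    (um up : ℝ) (hlt : um < up)
    (hgum : g um = 0) (hgup : g up = 0)
    (hg'up : 0 < deriv g up)
    (hgne : ∀ v ∈ Set.Ioo um up, g v ≠ 0)
    (σ : ℝ) (hσ : ∀ v ∈ Set.Icc um up, deriv f v < σ) :
    ∃ ub : ℝ → ℝ,
      (ContDiff ℝ 1 ub ∧ ub 0 = (um + up) / 2 ∧
        ∀ x, deriv ub x = g (ub x) / (deriv f (ub x) - σ)) ∧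
      (∀ w : ℝ → ℝ, ContDiff ℝ 1 w → w 0 = (um + up) / 2 →
        (∀ x, deriv w x = g (w x) / (deriv f (w x) - σ)) → w = ub) ∧
      StrictMono ub ∧
      (∀ x, ub x ∈ Set.Ioo um up) ∧
      Tendsto ub atBot (nhds um) ∧
      Tendsto ub atTop (nhds up) ∧
      (∀ w : ℝ → ℝ, ContDiff ℝ 1 w →
        (∀ x, deriv w x = g (w x) / (deriv f (w x) - σ)) →
        Tendsto w atBot (nhds um) → Tendsto w atTop (nhds up) →
        ∃ x0 : ℝ, ∀ x, w x = ub (x + x0)) := by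
  have hdf : ContDiff ℝ (⊤ : ℕ∞) (deriv f) := (contDiff_infty_iff_deriv.mp hf).2
  have hmid : (um + up) / 2 ∈ Ioo um up := ⟨by linarith, by linarith⟩
  set h : ℝ → ℝ := fun v => g v / (deriv f v - σ)
  have hg_neg := neg_of_mem_Ioo_of_deriv_pos hg.continuous.continuousOn hgup hg'up hgne
  have hh_pos : ∀ v ∈ Ioo um up, 0 < h v := fun v hv =>
    div_pos_of_neg_of_neg (hg_neg v hv) (sub_neg.2 (hσ v (Ioo_subset_Icc_self hv)))
  have hh_C1 : ∀ v ∈ Icc um up, ContDiffAt ℝ 1 h v := fun v hv =>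
    (hg.contDiffAt.div (hdf.contDiffAt.sub contDiffAt_const) (sub_neg.2 (hσ v hv)).ne).of_le
      (by simp)
  have hh_cont : ContinuousOn h (Ioo um up) := fun v hv =>
    (hh_C1 v (Ioo_subset_Icc_self hv)).continuousAt.continuousWithinAt
  obtain ⟨hF_bot, hF_top⟩ := tendsto_integral_inv_div_nhdsGT_nhdsLT hdf.continuous
    (hg.of_le (by simp)) hlt hgum hgup hg_neg hσ hmid
  obtain ⟨u, hu0, hmono, hrange, hu'⟩ :=
    exists_strictMono_hasDerivAt_of_tendsto_integral_inv hmid hh_cont hh_pos hF_bot hF_top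
  have hmem : ∀ x, u x ∈ Ioo um up := fun x => hrange ▸ mem_range_self x
  have hrigid : ∀ w : ℝ → ℝ, ContDiff ℝ 1 w → (∀ x, deriv w x = h (w x)) →
      ∀ x₁ c, w x₁ = u (x₁ + c) → w = fun x => u (x + c) := fun w hw hode x₁ c h₁ =>
    eq_of_hasDerivAt_of_contDiffAt (fun x => (hu' (x + c)).comp_add_const x c)
      (fun x => hode x ▸ (hw.differentiable one_ne_zero x).hasDerivAt)
      (fun x => hh_C1 _ (Ioo_subset_Icc_self (hmem _))) h₁
  refine ⟨u, ⟨contDiff_one_of_hasDerivAt_comp hh_cont hu' hmem, hu0, fun x => (hu' x).deriv⟩,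
    fun w hw hw0 hode => ?_, hmono, hmem, tendsto_atBot_isGLB hmono.monotone
    (hrange ▸ isGLB_Ioo hlt), tendsto_atTop_isLUB hmono.monotone (hrange ▸ isLUB_Ioo hlt),
    fun w hw hode hbot htop => ?_⟩
  · simpa using hrigid w hw hode 0 0 (by simp [hw0, hu0])
  · obtain ⟨x₁, hx₁⟩ := mem_range_of_exists_le_of_exists_ge hw.continuous
      (hbot.eventually (eventually_le_nhds hmid.1)).exists
      (htop.eventually (eventually_ge_nhds hmid.2)).exists
    exact ⟨-x₁, congrFun (hrigid w hw hode x₁ (-x₁) (by simp [hx₁, hu0]))⟩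

/-- **Existence, uniqueness and asymptotics of smooth monostable front profiles.**
For the scalar balance law `∂_t u + ∂_x (f(u)) = g(u)`, given consecutive non-degenerate
zeros `u₋ < u₊` of `g` with `g'(u₋) < 0 < g'(u₊)` and a speed `σ` with `σ > f'` on
`[u₋, u₊]`, there is a unique `C¹` profile `ū` with `ū 0 = (u₋+u₊)/2` solving
`ū' = g(ū)/(f'(ū) − σ)`; it is strictly increasing, takes values in `(u₋,u₊)`, connects
`u₋` at `−∞` to `u₊` at `+∞`, and every solution of the ODE with the same limits is a
translate of `ū`. -/
theorem stmt_0
    (f g : ℝ → ℝ) (hf : ContDiff ℝ (⊤ : ℕ∞) f) (hg : ContDiff ℝ (⊤ : ℕ∞) g)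
    (um up : ℝ) (hlt : um < up)
    (hgum : g um = 0) (hgup : g up = 0)
    (hg'um : deriv g um < 0) (hg'up : 0 < deriv g up)
    (hgne : ∀ v ∈ Set.Ioo um up, g v ≠ 0)
    (σ : ℝ) (hσ : ∀ v ∈ Set.Icc um up, deriv f v < σ) :
    ∃ ub : ℝ → ℝ,
      (ContDiff ℝ 1 ub ∧ ub 0 = (um + up) / 2 ∧
        ∀ x, deriv ub x = g (ub x) / (deriv f (ub x) - σ)) ∧
      (∀ w : ℝ → ℝ, ContDiff ℝ 1 w → w 0 = (um + up) / 2 →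
        (∀ x, deriv w x = g (w x) / (deriv f (w x) - σ)) → w = ub) ∧
      StrictMono ub ∧
      (∀ x, ub x ∈ Set.Ioo um up) ∧
      Tendsto ub atBot (nhds um) ∧
      Tendsto ub atTop (nhds up) ∧
      (∀ w : ℝ → ℝ, ContDiff ℝ 1 w →
        (∀ x, deriv w x = g (w x) / (deriv f (w x) - σ)) →
        Tendsto w atBot (nhds um) → Tendsto w atTop (nhds up) →
        ∃ x0 : ℝ, ∀ x, w x = ub (x + x0)) :=
  stmt_0_general f g hf hg um up hlt hgum hgup hg'up hgne σ hσ
end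

section
/- (i) Let κ > 0 and h ∈ C^1(ℝ;ℝ); if e^{κx}·h(x) → a and e^{κx}·h'(x) → b as x → +∞ for some real a, b, then b = −κ·a. (ii) In the front setting, let u_0 ∈ C^1(ℝ;ℝ) be such that e^{κ⁺x}·(u_0 − ū)(x) → a and e^{κ⁺x}·(u_0 − ū)'(x) → b as x → +∞; assume that α⁺ := lim_{x→+∞} e^{κ⁺x}·ū'(x) exists with α⁺ ≠ 0 and that 1 − κ⁺·a/α⁺ > 0, and set ψ_∞ := (1/κ⁺)·ln(1 − κ⁺·a/α⁺). Then e^{κ⁺x}·(u_0(x) − ū(x − ψ_∞)) → 0 and e^{κ⁺x}·(u_0'(x) − ū'(x − ψ_∞)) → 0 as x → +∞. -/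
/-!
Part (i): the derivative of `e^{κx} h(x)` is `κ e^{κx} h(x) + e^{κx} h'(x)`, which tends to
`κ a + b`; a function with a finite limit at `+∞` cannot have a derivative tending to a nonzero
limit, so `κ a + b = 0`.

Part (ii): by L'Hôpital, `e^{κx}(ū(x) − u₊) → −α⁺/κ`, and shifting by `ψ` multiplies the limits of
`e^{κx}(ū(x − ψ) − u₊)` and `e^{κx} ū'(x − ψ)` by `e^{κψ} = 1 − κ a/α⁺`. Writing
`u₀(x) − ū(x − ψ) = (u₀ − ū)(x) + (ū(x) − u₊) − (ū(x − ψ) − u₊)` and using `b = −κ a` from (i),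
both limits cancel exactly.
-/

open Filter Topology

theorem eq_zero_of_hasDerivAt_of_tendsto {F D : ℝ → ℝ} {a L : ℝ}
    (hF : ∀ x, HasDerivAt F (D x) x) (hFa : Tendsto F atTop (𝓝 a))
    (hD : Tendsto D atTop (𝓝 L)) : L = 0 := by
  have slope : ∀ x : ℝ, ∃ c ∈ Set.Ioo x (x + 1), D c = F (x + 1) - F x := by
    intro x
    obtain ⟨c, hc, hslope⟩ := exists_hasDerivAt_eq_slope F D (lt_add_one x)
      (fun y _ => (hF y).continuousAt.continuousWithinAt) (fun y _ => hF y)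
    exact ⟨c, hc, by simpa using hslope⟩
  choose c hc hslope using slope
  have hc_top : Tendsto c atTop atTop := tendsto_atTop_mono (fun x => (hc x).1.le) tendsto_id
  have hdiff : Tendsto (fun x => F (x + 1) - F x) atTop (𝓝 (a - a)) :=
    (hFa.comp (tendsto_atTop_add_const_right _ 1 tendsto_id)).sub hFa
  have := tendsto_nhds_unique (hD.comp hc_top) (hdiff.congr fun x => (hslope x).symm)
  simpa using this

theorem hasDerivAt_exp_mul_mul {h : ℝ → ℝ} {h' κ x : ℝ} (hh : HasDerivAt h h' x) :
    HasDerivAt (fun y => Real.exp (κ * y) * h y)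
      (κ * (Real.exp (κ * x) * h x) + Real.exp (κ * x) * h') x := by
  have hexp : HasDerivAt (fun y => Real.exp (κ * y)) (Real.exp (κ * x) * (κ * 1)) x :=
    ((hasDerivAt_id x).const_mul κ).exp
  exact (hexp.mul hh).congr_deriv (by ring)

theorem eq_neg_mul_of_tendsto_exp_mul {κ a b : ℝ} {h : ℝ → ℝ} (hh : Differentiable ℝ h)
    (ha : Tendsto (fun x => Real.exp (κ * x) * h x) atTop (𝓝 a))
    (hb : Tendsto (fun x => Real.exp (κ * x) * deriv h x) atTop (𝓝 b)) :
    b = -κ * a := by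
  have := eq_zero_of_hasDerivAt_of_tendsto (fun x => hasDerivAt_exp_mul_mul (hh x).hasDerivAt)
    ha ((ha.const_mul κ).add hb)
  linarith

theorem tendsto_exp_mul_sub_of_tendsto_exp_mul_deriv {v : ℝ → ℝ} {κ l α : ℝ} (hκ : 0 < κ)
    (hv : Differentiable ℝ v) (hvl : Tendsto v atTop (𝓝 l))
    (hα : Tendsto (fun x => Real.exp (κ * x) * deriv v x) atTop (𝓝 α)) :
    Tendsto (fun x => Real.exp (κ * x) * (v x - l)) atTop (𝓝 (-(α / κ))) := by
  have hnum : ∀ x, HasDerivAt (fun y => v y - l) (deriv v x) x :=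
    fun x => (hv x).hasDerivAt.sub_const l
  have hden : ∀ x, HasDerivAt (fun y => Real.exp (-(κ * y))) (Real.exp (-(κ * x)) * -κ) x :=
    fun x => (by simpa using ((hasDerivAt_id x).const_mul κ).fun_neg :
      HasDerivAt (fun y => -(κ * y)) (-κ) x).exp
  have hden_ne : ∀ x, Real.exp (-(κ * x)) * -κ ≠ 0 :=
    fun x => mul_ne_zero (Real.exp_ne_zero _) (neg_ne_zero.mpr hκ.ne')
  have hnum_lim : Tendsto (fun y => v y - l) atTop (𝓝 0) := by
    simpa using hvl.sub_const l
  have hden_lim : Tendsto (fun y => Real.exp (-(κ * y))) atTop (𝓝 0) :=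
    Real.tendsto_exp_atBot.comp
      (tendsto_neg_atTop_atBot.comp (tendsto_id.const_mul_atTop hκ))
  have hratio : Tendsto (fun x => deriv v x / (Real.exp (-(κ * x)) * -κ)) atTop
      (𝓝 (-(α / κ))) := by
    rw [← div_neg]
    refine (hα.div_const (-κ)).congr fun x => ?_
    rw [Real.exp_neg]
    field_simp
  refine (HasDerivAt.lhopital_zero_atTop (.of_forall hnum) (.of_forall hden)
    (.of_forall hden_ne) hnum_lim hden_lim hratio).congr fun x => ?_
  rw [Real.exp_neg]
  field_simp

theorem Filter.Tendsto.exp_mul_comp_sub {v : ℝ → ℝ} {κ c : ℝ} (ψ : ℝ)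
    (hv : Tendsto (fun x => Real.exp (κ * x) * v x) atTop (𝓝 c)) :
    Tendsto (fun x => Real.exp (κ * x) * v (x - ψ)) atTop (𝓝 (Real.exp (κ * ψ) * c)) := by
  refine ((hv.comp (tendsto_atTop_add_const_right _ (-ψ) tendsto_id)).const_mul _).congr
    fun x => ?_
  simp only [Function.comp_apply, id, ← sub_eq_add_neg, ← mul_assoc, ← Real.exp_add]
  ring_nf

theorem tendsto_exp_mul_sub_comp_sub_log {u₀ v : ℝ → ℝ} {κ l a b α : ℝ} (hκ : 0 < κ)
    (hu₀ : Differentiable ℝ u₀) (hv : Differentiable ℝ v) (hvl : Tendsto v atTop (𝓝 l))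
    (ha : Tendsto (fun x => Real.exp (κ * x) * (u₀ x - v x)) atTop (𝓝 a))
    (hb : Tendsto (fun x => Real.exp (κ * x) * deriv (fun y => u₀ y - v y) x) atTop (𝓝 b))
    (hα : Tendsto (fun x => Real.exp (κ * x) * deriv v x) atTop (𝓝 α)) (hα0 : α ≠ 0)
    (hpos : 0 < 1 - κ * a / α) :
    Tendsto (fun x => Real.exp (κ * x)
        * (u₀ x - v (x - (1 / κ) * Real.log (1 - κ * a / α)))) atTop (𝓝 0) ∧
    Tendsto (fun x => Real.exp (κ * x)
        * (deriv u₀ x - deriv v (x - (1 / κ) * Real.log (1 - κ * a / α)))) atTop (𝓝 0) := by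
  set ψ := (1 / κ) * Real.log (1 - κ * a / α)
  have hshift : Real.exp (κ * ψ) = 1 - κ * a / α := by
    rw [show κ * ψ = Real.log (1 - κ * a / α) by
      rw [← mul_assoc, mul_one_div_cancel hκ.ne', one_mul], Real.exp_log hpos]
  have hvl_rate := tendsto_exp_mul_sub_of_tendsto_exp_mul_deriv hκ hv hvl hα
  have hb_eq : b = -κ * a := eq_neg_mul_of_tendsto_exp_mul (hu₀.sub hv) ha hb
  constructor
  · have hlim := ha.add (hvl_rate.sub (hvl_rate.exp_mul_comp_sub ψ))
    rw [hshift, show a + (-(α / κ) - (1 - κ * a / α) * -(α / κ)) = 0 by field_simp; ring]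
      at hlim
    exact hlim.congr fun x => by ring
  · have hlim := hb.add (hα.sub (hα.exp_mul_comp_sub ψ))
    rw [hshift, hb_eq, show -κ * a + (α - (1 - κ * a / α) * α) = 0 by field_simp; ring] at hlim
    refine hlim.congr fun x => ?_
    rw [deriv_fun_sub (hu₀ x) (hv x)]
    ring

theorem stmt_4_general
    (f g : ℝ → ℝ)
    (σ : ℝ) (ub : ℝ → ℝ) (hub : ContDiff ℝ (⊤ : ℕ∞) ub)
    (up : ℝ)
    (hlp : Tendsto ub atTop (nhds up))
    (hg'up : 0 < deriv g up)
    (hfup : deriv f up ≠ σ)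
    (κp : ℝ) (hκp : κp = deriv g up / |deriv f up - σ|) :
    (∀ (κ a b : ℝ) (h : ℝ → ℝ), 0 < κ → ContDiff ℝ 1 h →
      Tendsto (fun x => Real.exp (κ * x) * h x) atTop (nhds a) →
      Tendsto (fun x => Real.exp (κ * x) * deriv h x) atTop (nhds b) →
      b = -κ * a) ∧
    (∀ (u0 : ℝ → ℝ) (a b αp : ℝ), ContDiff ℝ 1 u0 →
      Tendsto (fun x => Real.exp (κp * x) * (u0 x - ub x)) atTop (nhds a) →
      Tendsto (fun x => Real.exp (κp * x) * deriv (fun y => u0 y - ub y) x) atTop (nhds b) →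
      Tendsto (fun x => Real.exp (κp * x) * deriv ub x) atTop (nhds αp) →
      αp ≠ 0 →
      0 < 1 - κp * a / αp →
      Tendsto (fun x => Real.exp (κp * x)
          * (u0 x - ub (x - (1 / κp) * Real.log (1 - κp * a / αp)))) atTop (nhds 0) ∧
      Tendsto (fun x => Real.exp (κp * x)
          * (deriv u0 x - deriv ub (x - (1 / κp) * Real.log (1 - κp * a / αp))))
        atTop (nhds 0)) := by
  have hκp_pos : 0 < κp := hκp ▸ div_pos hg'up (abs_pos.mpr (sub_ne_zero.mpr hfup))
  refine ⟨fun κ a b h _ hh ha hb => eq_neg_mul_of_tendsto_exp_mul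
    (hh.differentiable one_ne_zero) ha hb, fun u0 a b αp hu0 => ?_⟩
  exact tendsto_exp_mul_sub_comp_sub_log hκp_pos (hu0.differentiable one_ne_zero)
    (hub.differentiable (by simp)) hlp

/-- **Limits at `+∞` of exponentially rescaled perturbations** (Remark "xlimit").
(i) If `e^{κx} h(x) → a` and `e^{κx} h'(x) → b` as `x → +∞` for a `C¹` function `h`,
then `b = −κ a`.
(ii) In the non-characteristic monostable front setting, if
`e^{κ⁺x}(u₀−ū)(x) → a`, `e^{κ⁺x}(u₀−ū)'(x) → b`, `α⁺ := lim e^{κ⁺x} ū'(x)` exists and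
is nonzero, and `1 − κ⁺ a/α⁺ > 0`, then with `ψ_∞ := κ⁺⁻¹ ln(1 − κ⁺ a/α⁺)` the shifted
perturbation `e^{κ⁺x}(u₀(x) − ū(x − ψ_∞))` and its derivative version tend to `0` at `+∞`. -/
theorem stmt_4
    (f g : ℝ → ℝ) (hf : ContDiff ℝ (⊤ : ℕ∞) f) (hg : ContDiff ℝ (⊤ : ℕ∞) g)
    (σ : ℝ) (ub : ℝ → ℝ) (hub : ContDiff ℝ (⊤ : ℕ∞) ub)
    (hubbd : ∃ M, ∀ x, |ub x| ≤ M)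
    (hub' : ∀ x, deriv ub x ≠ 0)
    (hnc : ∀ x, deriv f (ub x) ≠ σ)
    (hprof : ∀ x, (deriv f (ub x) - σ) * deriv ub x = g (ub x))
    (um up : ℝ)
    (hlm : Tendsto ub atBot (nhds um)) (hlp : Tendsto ub atTop (nhds up))
    (hgum : g um = 0) (hgup : g up = 0)
    (hg'um : deriv g um < 0) (hg'up : 0 < deriv g up)
    (hfum : deriv f um ≠ σ) (hfup : deriv f up ≠ σ)
    (κp : ℝ) (hκp : κp = deriv g up / |deriv f up - σ|) :
    (∀ (κ a b : ℝ) (h : ℝ → ℝ), 0 < κ → ContDiff ℝ 1 h →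
      Tendsto (fun x => Real.exp (κ * x) * h x) atTop (nhds a) →
      Tendsto (fun x => Real.exp (κ * x) * deriv h x) atTop (nhds b) →
      b = -κ * a) ∧
    (∀ (u0 : ℝ → ℝ) (a b αp : ℝ), ContDiff ℝ 1 u0 →
      Tendsto (fun x => Real.exp (κp * x) * (u0 x - ub x)) atTop (nhds a) →
      Tendsto (fun x => Real.exp (κp * x) * deriv (fun y => u0 y - ub y) x) atTop (nhds b) →
      Tendsto (fun x => Real.exp (κp * x) * deriv ub x) atTop (nhds αp) →
      αp ≠ 0 →
      0 < 1 - κp * a / αp →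
      Tendsto (fun x => Real.exp (κp * x)
          * (u0 x - ub (x - (1 / κp) * Real.log (1 - κp * a / αp)))) atTop (nhds 0) ∧
      Tendsto (fun x => Real.exp (κp * x)
          * (deriv u0 x - deriv ub (x - (1 / κp) * Real.log (1 - κp * a / αp))))
        atTop (nhds 0)) :=
  stmt_4_general f g σ ub hub up hlp hg'up hfup κp hκp
end

section
/- Let Ω : [0,∞) → [0,∞) be bounded with Ω(x) → 0 as x → +∞ and sup Ω > 0. Then there exists a nonincreasing function ρ : [0,∞) → (0,∞) with ρ(t) → 0 as t → +∞ such that ρ(s) ≤ 4·e^{(ln 2)·(t−s)}·ρ(t) for all 0 ≤ s ≤ t, and Ω(x) ≤ (sup Ω)·ρ(x) for all x ≥ 0. (Consequently any bounded function converging to 0 at infinity is dominated, up to a constant, by a sub-exponential weight.) -/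
/-!
Let `m n` be the supremum of `Ω` on `[n, ∞)`; it is nonincreasing and tends to `0`. Its least
majorant `c` that decreases by at most a factor `2` per unit step,
`c (n+1) = max (c n / 2) (m (n+1))`, is still nonincreasing and tends to `0`, since its limit `L`
satisfies `L = max (L / 2) 0`. Then `ρ t = c ⌊t⌋ / sup Ω` works: the factor-`2` control gives
`ρ s ≤ 2 ^ (t - s + 1) ρ t`.
-/

open Filter Set Topology

section TailSup

variable {f : ℝ → ℝ}

lemma bddAbove_image_Ici_natCast (hbd : BddAbove (f '' Ici 0)) (n : ℕ) :
    BddAbove (f '' Ici (n : ℝ)) :=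
  hbd.mono (image_mono (Ici_subset_Ici.2 n.cast_nonneg))

lemma antitone_sSup_image_Ici_natCast (hbd : BddAbove (f '' Ici 0)) :
    Antitone fun n : ℕ => sSup (f '' Ici (n : ℝ)) := fun _ _ hkl =>
  csSup_le_csSup (bddAbove_image_Ici_natCast hbd _) (nonempty_Ici.image f)
    (image_mono (Ici_subset_Ici.2 (Nat.cast_le.2 hkl)))

lemma tendsto_sSup_image_Ici_natCast (hbd : BddAbove (f '' Ici 0))
    (hf : Tendsto f atTop (𝓝 0)) :
    Tendsto (fun n : ℕ => sSup (f '' Ici (n : ℝ))) atTop (𝓝 0) := by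
  have hle (n : ℕ) {x : ℝ} (hx : (n : ℝ) ≤ x) : f x ≤ sSup (f '' Ici (n : ℝ)) :=
    le_csSup (bddAbove_image_Ici_natCast hbd n) (mem_image_of_mem f hx)
  have hnonneg (n : ℕ) : 0 ≤ sSup (f '' Ici (n : ℝ)) :=
    le_of_tendsto hf (eventually_atTop.2 ⟨n, fun _ => hle n⟩)
  refine tendsto_order.2 ⟨fun a ha => Eventually.of_forall fun n => ha.trans_le (hnonneg n),
    fun a ha => ?_⟩
  obtain ⟨X, hX⟩ := eventually_atTop.1 (hf.eventually (ge_mem_nhds (half_pos ha)))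
  refine eventually_atTop.2 ⟨⌈X⌉₊, fun n hn => ?_⟩
  refine lt_of_le_of_lt (csSup_le (nonempty_Ici.image f) ?_) (half_lt_self ha)
  rintro _ ⟨x, hx, rfl⟩
  exact hX x ((Nat.le_ceil X).trans ((Nat.cast_le.2 hn).trans hx))

end TailSup

section DoublingControl

variable {c : ℕ → ℝ}

lemma le_two_pow_mul_of_le_two_mul_succ (hc : ∀ n, c n ≤ 2 * c (n + 1)) (k d : ℕ) :
    c k ≤ 2 ^ d * c (k + d) := by
  induction d with
  | zero => simp
  | succ d ih =>
    calc c k ≤ 2 ^ d * c (k + d) := ih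
      _ ≤ 2 ^ d * (2 * c (k + d + 1)) := by gcongr; exact hc _
      _ = 2 ^ (d + 1) * c (k + (d + 1)) := by ring_nf

lemma two_pow_floor_sub_floor_le {s t : ℝ} (hs : 0 ≤ s) (hst : s ≤ t) :
    (2 : ℝ) ^ (⌊t⌋₊ - ⌊s⌋₊) ≤ 2 * Real.exp (Real.log 2 * (t - s)) := by
  have hfloor : ⌊s⌋₊ ≤ ⌊t⌋₊ := Nat.floor_le_floor hst
  have hexponent : ((⌊t⌋₊ - ⌊s⌋₊ : ℕ) : ℝ) ≤ t - s + 1 := by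
    rw [Nat.cast_sub hfloor]
    linarith [Nat.floor_le (hs.trans hst), Nat.lt_floor_add_one s]
  calc (2 : ℝ) ^ (⌊t⌋₊ - ⌊s⌋₊) = (2 : ℝ) ^ ((⌊t⌋₊ - ⌊s⌋₊ : ℕ) : ℝ) :=
        (Real.rpow_natCast _ _).symm
    _ ≤ (2 : ℝ) ^ (t - s + 1) := Real.rpow_le_rpow_of_exponent_le one_le_two hexponent
    _ = 2 * Real.exp (Real.log 2 * (t - s)) := by
      rw [Real.rpow_add two_pos, Real.rpow_one, Real.rpow_def_of_pos two_pos, mul_comm]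

lemma le_mul_exp_floor_of_le_two_mul_succ (hc : ∀ n, c n ≤ 2 * c (n + 1))
    (hc_nonneg : ∀ n, 0 ≤ c n) {s t : ℝ} (hs : 0 ≤ s) (hst : s ≤ t) :
    c ⌊s⌋₊ ≤ 2 * Real.exp (Real.log 2 * (t - s)) * c ⌊t⌋₊ := by
  have hfloor : ⌊s⌋₊ ≤ ⌊t⌋₊ := Nat.floor_le_floor hst
  calc c ⌊s⌋₊ ≤ 2 ^ (⌊t⌋₊ - ⌊s⌋₊) * c ⌊t⌋₊ := by
        simpa [Nat.add_sub_cancel' hfloor] using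
          le_two_pow_mul_of_le_two_mul_succ hc ⌊s⌋₊ (⌊t⌋₊ - ⌊s⌋₊)
    _ ≤ 2 * Real.exp (Real.log 2 * (t - s)) * c ⌊t⌋₊ := by
      gcongr
      · exact hc_nonneg _
      · exact two_pow_floor_sub_floor_le hs hst

end DoublingControl

section HalvingMajorant

noncomputable def halvingMajorant (m : ℕ → ℝ) : ℕ → ℝ
  | 0 => m 0
  | n + 1 => max (halvingMajorant m n / 2) (m (n + 1))

variable {m : ℕ → ℝ}

lemma halvingMajorant_succ (n : ℕ) :
    halvingMajorant m (n + 1) = max (halvingMajorant m n / 2) (m (n + 1)) := rfl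

lemma le_halvingMajorant (n : ℕ) : m n ≤ halvingMajorant m n := by
  cases n with
  | zero => exact le_rfl
  | succ n => exact le_max_right _ _

lemma halvingMajorant_le_two_mul_succ (n : ℕ) :
    halvingMajorant m n ≤ 2 * halvingMajorant m (n + 1) := by
  have := le_max_left (halvingMajorant m n / 2) (m (n + 1))
  rw [← halvingMajorant_succ] at this
  linarith

lemma halvingMajorant_pos (hm : 0 < m 0) (n : ℕ) : 0 < halvingMajorant m n := by
  have := le_two_pow_mul_of_le_two_mul_succ (halvingMajorant_le_two_mul_succ (m := m)) 0 n
  rw [zero_add] at this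
  exact pos_of_mul_pos_right (hm.trans_le this) (by positivity)

lemma halvingMajorant_antitone (hm : Antitone m) (hm_nonneg : ∀ n, 0 ≤ m n) :
    Antitone (halvingMajorant m) := by
  refine antitone_nat_of_succ_le fun n => ?_
  have hnonneg : 0 ≤ halvingMajorant m n := (hm_nonneg n).trans (le_halvingMajorant n)
  rw [halvingMajorant_succ]
  exact max_le (by linarith) ((hm n.le_succ).trans (le_halvingMajorant n))

lemma tendsto_halvingMajorant (hm : Antitone m) (hlim : Tendsto m atTop (𝓝 0)) :
    Tendsto (halvingMajorant m) atTop (𝓝 0) := by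
  have hm_nonneg : ∀ n, 0 ≤ m n := hm.le_of_tendsto hlim
  have hc_nonneg (n : ℕ) : 0 ≤ halvingMajorant m n :=
    (hm_nonneg n).trans (le_halvingMajorant n)
  set L := ⨅ n, halvingMajorant m n
  have hL : Tendsto (halvingMajorant m) atTop (𝓝 L) :=
    tendsto_atTop_ciInf (halvingMajorant_antitone hm hm_nonneg) ⟨0, by
      rintro _ ⟨n, rfl⟩; exact hc_nonneg n⟩
  have hL_nonneg : 0 ≤ L := le_ciInf hc_nonneg
  have hfixed : L = max (L / 2) 0 := by
    refine tendsto_nhds_unique ((tendsto_add_atTop_iff_nat 1).2 hL) ?_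
    simp_rw [halvingMajorant_succ]
    exact (hL.div_const 2).max ((tendsto_add_atTop_iff_nat 1).2 hlim)
  have hL_zero : L = 0 := by
    rw [max_eq_left (by positivity)] at hfixed
    linarith
  rwa [hL_zero] at hL

end HalvingMajorant

theorem stmt_10_general (Ω : ℝ → ℝ)
    (hbd : BddAbove (Ω '' Ici (0:ℝ)))
    (hlim : Tendsto Ω atTop (nhds 0))
    (hpos : 0 < sSup (Ω '' Ici (0:ℝ))) :
    ∃ ρ : ℝ → ℝ,
      (∀ t, 0 ≤ t → 0 < ρ t) ∧
      (∀ s t, 0 ≤ s → s ≤ t → ρ t ≤ ρ s) ∧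
      Tendsto ρ atTop (nhds 0) ∧
      (∀ s t, 0 ≤ s → s ≤ t →
        ρ s ≤ 4 * Real.exp (Real.log 2 * (t - s)) * ρ t) ∧
      (∀ x, 0 ≤ x → Ω x ≤ sSup (Ω '' Ici (0:ℝ)) * ρ x) := by
  set M := sSup (Ω '' Ici (0:ℝ))
  set m : ℕ → ℝ := fun n => sSup (Ω '' Ici (n : ℝ))
  have hm : Antitone m := antitone_sSup_image_Ici_natCast hbd
  have hm_lim : Tendsto m atTop (𝓝 0) := tendsto_sSup_image_Ici_natCast hbd hlim
  set c := halvingMajorant m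
  have hc_pos : ∀ n, 0 < c n := halvingMajorant_pos (by simpa [m] using hpos)
  refine ⟨fun t => c ⌊t⌋₊ / M, fun t _ => div_pos (hc_pos _) hpos,
    fun s t _ hst => ?_, ?_, fun s t hs hst => ?_, fun x hx => ?_⟩
  · exact div_le_div_of_nonneg_right
      (halvingMajorant_antitone hm (hm.le_of_tendsto hm_lim) (Nat.floor_le_floor hst)) hpos.le
  · simpa using ((tendsto_halvingMajorant hm hm_lim).comp tendsto_nat_floor_atTop).div_const M
  · have hρ := le_mul_exp_floor_of_le_two_mul_succ halvingMajorant_le_two_mul_succ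
      (fun n => (hc_pos n).le) hs hst
    show c ⌊s⌋₊ / M ≤ 4 * Real.exp (Real.log 2 * (t - s)) * (c ⌊t⌋₊ / M)
    rw [← mul_div_assoc]
    gcongr
    exact hρ.trans (by gcongr; exacts [(hc_pos _).le, by norm_num])
  · rw [mul_div_cancel₀ _ hpos.ne']
    exact (le_csSup (bddAbove_image_Ici_natCast hbd _)
      (mem_image_of_mem Ω (Nat.floor_le hx))).trans (le_halvingMajorant (m := m) _)

/-- **Domination of vanishing weights by sub-exponential weights**: any bounded
nonnegative `Ω` on `[0,∞)` converging to `0` at `+∞` with `sup Ω > 0` is dominated by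
`(sup Ω)·ρ` for some positive nonincreasing `ρ` tending to `0` at `+∞` and satisfying
the sub-exponential ratio bound `ρ(s) ≤ 4·e^{(ln 2)(t−s)}·ρ(t)` for `0 ≤ s ≤ t`. -/
theorem stmt_10 (Ω : ℝ → ℝ)
    (hnn : ∀ x, 0 ≤ x → 0 ≤ Ω x)
    (hbd : BddAbove (Ω '' Ici (0:ℝ)))
    (hlim : Tendsto Ω atTop (nhds 0))
    (hpos : 0 < sSup (Ω '' Ici (0:ℝ))) :
    ∃ ρ : ℝ → ℝ,
      (∀ t, 0 ≤ t → 0 < ρ t) ∧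
      (∀ s t, 0 ≤ s → s ≤ t → ρ t ≤ ρ s) ∧
      Tendsto ρ atTop (nhds 0) ∧
      (∀ s t, 0 ≤ s → s ≤ t →
        ρ s ≤ 4 * Real.exp (Real.log 2 * (t - s)) * ρ t) ∧
      (∀ x, 0 ≤ x → Ω x ≤ sSup (Ω '' Ici (0:ℝ)) * ρ x) :=
  stmt_10_general Ω hbd hlim hpos
end

section
/- Let f, g : ℝ → ℝ be C^1 and σ ∈ ℝ. Let ū : (−∞,0) → ℝ be C^1 with f'(ū(x)) ≠ σ and ū'(x)·(f'(ū(x)) − σ) = g(ū(x)) for all x < 0. Assume ū(x) → u_∞ as x → −∞, with g(u_∞) = 0, g'(u_∞) ≠ 0, f'(u_∞) ≠ σ, and ū(x) ≠ u_∞ for all x < 0. Then g'(u_∞)/(f'(u_∞) − σ) > 0. -/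
/-!
Write `ū' = k·(ū − u_∞)` with `k = slope g u_∞ ū / (f'(ū) − σ)`; as `ū → u_∞`, the rate `k`
tends to `g'(u_∞)/(f'(u_∞) − σ)`. If this limit were negative, `(ū − u_∞)²` would be
positive and nonincreasing near `−∞`, which is incompatible with its limit `0` there.
-/

open Filter Set Topology

theorem HasDerivAt.tendsto_slope_comp {α : Type*} {l : Filter α} {g : ℝ → ℝ} {u : α → ℝ}
    {A c : ℝ} (hg : HasDerivAt g A c) (hu : Tendsto u l (𝓝 c)) (hne : ∀ᶠ x in l, u x ≠ c) :
    Tendsto (fun x => slope g c (u x)) l (𝓝 A) :=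
  (hasDerivAt_iff_tendsto_slope.mp hg).comp (tendsto_nhdsWithin_iff.mpr ⟨hu, hne⟩)

theorem nonneg_of_tendsto_atBot_of_deriv_eq_mul_sub {u k : ℝ → ℝ} {a c L : ℝ}
    (hu : DifferentiableOn ℝ u (Iio a)) (hlim : Tendsto u atBot (𝓝 c))
    (hne : ∀ x < a, u x ≠ c) (hderiv : ∀ x < a, deriv u x = k x * (u x - c))
    (hk : Tendsto k atBot (𝓝 L)) : 0 ≤ L := by
  by_contra! hL
  obtain ⟨X₀, hX₀⟩ := eventually_atBot.mp (hk.eventually (eventually_lt_nhds hL))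
  set X := min X₀ (a - 1)
  have hXa : X < a := (min_le_right _ _).trans_lt (by linarith)
  have hIic : Iic X ⊆ Iio a := fun t ht => (mem_Iic.mp ht).trans_lt hXa
  set v : ℝ → ℝ := fun x => (u x - c) ^ 2
  have hv_deriv : ∀ x < a, HasDerivAt v (2 * k x * (u x - c) ^ 2) x := by
    intro x hx
    have hux : HasDerivAt u (deriv u x) x :=
      (hu.differentiableAt (Iio_mem_nhds hx)).hasDerivAt
    refine ((hux.sub_const c).pow 2).congr_deriv ?_
    rw [hderiv x hx]
    ring
  have hv_anti : AntitoneOn v (Iic X) := by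
    refine antitoneOn_of_deriv_nonpos (convex_Iic X)
      (fun x hx => (hv_deriv x (hIic hx)).continuousAt.continuousWithinAt)
      (fun x hx =>
        (hv_deriv x (hIic (interior_subset hx))).differentiableAt.differentiableWithinAt)
      fun x hx => ?_
    rw [interior_Iic] at hx
    rw [(hv_deriv x (hIic (mem_Iic.mpr hx.le))).deriv]
    have hk_neg : k x < 0 := hX₀ x (hx.le.trans (min_le_left _ _))
    exact mul_nonpos_of_nonpos_of_nonneg (by linarith) (sq_nonneg _)
  have hv_lim : Tendsto v atBot (𝓝 0) := by
    simpa [v] using ((hlim.sub_const c).pow 2)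
  have hvX_nonpos : v X ≤ 0 :=
    ge_of_tendsto hv_lim (by
      filter_upwards [eventually_le_atBot X] with x hx
      exact hv_anti hx self_mem_Iic hx)
  have hvX_pos : 0 < v X :=
    sq_pos_of_ne_zero (sub_ne_zero.mpr (hne X hXa))
  linarith

/-- **Outgoing characteristics at a non-degenerate non-characteristic endstate**: if a
nonconstant profile piece on `(−∞,0)` solves `ū'·(f'(ū) − σ) = g(ū)`, stays away from
its endstate `u_∞` at `−∞`, and `u_∞` is non-degenerate (`g'(u_∞) ≠ 0`) and
non-characteristic (`f'(u_∞) ≠ σ`), then `g'(u_∞)/(f'(u_∞) − σ) > 0`. -/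
theorem stmt_12 (f g : ℝ → ℝ) (hf : ContDiff ℝ 1 f) (hg : ContDiff ℝ 1 g)
    (σ : ℝ) (ub : ℝ → ℝ)
    (hub : ContDiffOn ℝ 1 ub (Iio (0:ℝ)))
    (hnc : ∀ x < (0:ℝ), deriv f (ub x) ≠ σ)
    (hode : ∀ x < (0:ℝ), deriv ub x * (deriv f (ub x) - σ) = g (ub x))
    (uinf : ℝ) (hlim : Tendsto ub atBot (nhds uinf))
    (hg0 : g uinf = 0) (hg' : deriv g uinf ≠ 0) (hf' : deriv f uinf ≠ σ)
    (hne : ∀ x < (0:ℝ), ub x ≠ uinf) :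
    0 < deriv g uinf / (deriv f uinf - σ) := by
  have hB : deriv f uinf - σ ≠ 0 := sub_ne_zero.mpr hf'
  have hslope : Tendsto (fun x => slope g uinf (ub x)) atBot (𝓝 (deriv g uinf)) :=
    (hg.differentiable one_ne_zero uinf).hasDerivAt.tendsto_slope_comp hlim
      (by filter_upwards [eventually_lt_atBot 0] with x hx using hne x hx)
  have hchar : Tendsto (fun x => deriv f (ub x) - σ) atBot (𝓝 (deriv f uinf - σ)) :=
    (((hf.continuous_deriv le_rfl).tendsto uinf).comp hlim).sub_const σ
  have hderiv : ∀ x < (0:ℝ), deriv ub x =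
      slope g uinf (ub x) / (deriv f (ub x) - σ) * (ub x - uinf) := by
    intro x hx
    have hc : deriv f (ub x) - σ ≠ 0 := sub_ne_zero.mpr (hnc x hx)
    have hd : ub x - uinf ≠ 0 := sub_ne_zero.mpr (hne x hx)
    rw [eq_div_iff hc |>.mpr (hode x hx), slope_def_field, hg0, sub_zero]
    field_simp
  exact (nonneg_of_tendsto_atBot_of_deriv_eq_mul_sub (hub.differentiableOn one_ne_zero)
    hlim hne hderiv (hslope.div hchar hB)).lt_of_ne' (div_ne_zero hg' hB)
end

section
/- Let d ≥ 2, let f_∥, g : ℝ → ℝ and F_⊥ : ℝ → ℝ^{d−1} be C^1, and let σ = (σ_∥, σ_⊥) ∈ ℝ×ℝ^{d−1}. Let ū : ℝ → ℝ be C^1 with (f_∥'(ū(x)) − σ_∥)·ū'(x) = g(ū(x)) for all x, and let Z : ℝ → ℝ^{d−1} be C^1 with (f_∥'(ū(x)) − σ_∥)·Z'(x) = F_⊥'(ū(x)) − σ_⊥ for all x. Let ψ_0 : ℝ^{d−1} → ℝ be C^1 and suppose Φ : ℝ×ℝ^{d−1} → ℝ is C^1 and satisfies Φ(x,y) + ψ_0(y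 − Z(Φ(x,y))) = x for all (x,y). Then U(x,y) := ū(Φ(x,y)) satisfies (f_∥'(U) − σ_∥)·∂_x U + (F_⊥'(U) − σ_⊥)·∇_y U = g(U) at every point; equivalently, (t,(x,y)) ↦ U(x − t·σ_∥, y − t·σ_⊥) is a classical solution of the multidimensional balance law ∂_t u + div_𝐱(𝐅(u)) = g(u) with flux 𝐅 = (f_∥, F_⊥). -/
/-!
Differentiating `Φ p + ψ₀ (p.2 - Z (Φ p)) = p.1` shows that the derivative of `Φ` along the
direction `(1, Z'(Φ p))` equals `1`: the two choices `v = (1, 0)` and `v = (1, Z'(Φ p))` of the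
differentiated identity give `DΦ(1,0) (1 - c) = 1` and `(DΦ(1,Z') - 1) (1 - c) = 0` with
`c = Dψ₀ (Z')`, so `1 - c ≠ 0`. By the equation for `Z`, the transport field
`(f_∥'(ū) - σ_∥, F_⊥'(ū) - σ_⊥)` is `(f_∥'(ū) - σ_∥)` times this direction, so along it
`U = ū ∘ Φ` changes exactly like `ū`, and the profile equation for `ū` becomes the one for `U`.
The time-dependent statement is the profile equation at the moving point `p - t σ`.
-/

/-- `Φ (·, y)` inverts `x ↦ x + ψ (y - Z x)`. -/
def IsShiftInverse {E : Type*} [AddCommGroup E] (ψ : E → ℝ) (Z : ℝ → E) (Φ : ℝ × E → ℝ) :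
    Prop :=
  ∀ p : ℝ × E, Φ p + ψ (p.2 - Z (Φ p)) = p.1

namespace IsShiftInverse

variable {E : Type*} [NormedAddCommGroup E] [NormedSpace ℝ E]
  {ψ : E → ℝ} {Z : ℝ → E} {Φ : ℝ × E → ℝ} {p : ℝ × E}

theorem fderiv_apply_add_fderiv_apply (h : IsShiftInverse ψ Z Φ)
    (hΦ : DifferentiableAt ℝ Φ p) (hZ : DifferentiableAt ℝ Z (Φ p))
    (hψ : DifferentiableAt ℝ ψ (p.2 - Z (Φ p))) (v : ℝ × E) :
    fderiv ℝ Φ p v + fderiv ℝ ψ (p.2 - Z (Φ p)) (v.2 - fderiv ℝ Φ p v • deriv Z (Φ p))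
      = v.1 := by
  have hsum : HasFDerivAt (fun q : ℝ × E => Φ q + ψ (q.2 - Z (Φ q)))
      (fderiv ℝ Φ p + (fderiv ℝ ψ (p.2 - Z (Φ p))).comp
        (ContinuousLinearMap.snd ℝ ℝ E - (fderiv ℝ Φ p).smulRight (deriv Z (Φ p)))) p :=
    hΦ.hasFDerivAt.add <| hψ.hasFDerivAt.comp p <|
      hasFDerivAt_snd.sub <| hZ.hasDerivAt.hasFDerivAt.comp p hΦ.hasFDerivAt
  rw [show (fun q : ℝ × E => Φ q + ψ (q.2 - Z (Φ q))) = Prod.fst from funext h] at hsum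
  simpa using DFunLike.congr_fun (hsum.unique hasFDerivAt_fst) v

theorem fderiv_apply_one_deriv (h : IsShiftInverse ψ Z Φ)
    (hΦ : DifferentiableAt ℝ Φ p) (hZ : DifferentiableAt ℝ Z (Φ p))
    (hψ : DifferentiableAt ℝ ψ (p.2 - Z (Φ p))) :
    fderiv ℝ Φ p (1, deriv Z (Φ p)) = 1 := by
  set c := fderiv ℝ ψ (p.2 - Z (Φ p)) (deriv Z (Φ p))
  have h₀ : fderiv ℝ Φ p (1, 0) * (1 - c) = 1 := by
    have := h.fderiv_apply_add_fderiv_apply hΦ hZ hψ (1, 0)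
    simp only [zero_sub, map_neg, map_smul, smul_eq_mul] at this
    linear_combination this
  have h₁ : (fderiv ℝ Φ p (1, deriv Z (Φ p)) - 1) * (1 - c) = 0 := by
    have := h.fderiv_apply_add_fderiv_apply hΦ hZ hψ (1, deriv Z (Φ p))
    simp only [map_sub, map_smul, smul_eq_mul] at this
    linear_combination this
  have hc : 1 - c ≠ 0 := right_ne_zero_of_mul_eq_one h₀
  exact sub_eq_zero.mp ((mul_eq_zero.mp h₁).resolve_right hc)

theorem fderiv_comp_apply_one_deriv (h : IsShiftInverse ψ Z Φ) {u : ℝ → ℝ}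
    (hu : DifferentiableAt ℝ u (Φ p)) (hΦ : DifferentiableAt ℝ Φ p)
    (hZ : DifferentiableAt ℝ Z (Φ p)) (hψ : DifferentiableAt ℝ ψ (p.2 - Z (Φ p))) :
    fderiv ℝ (fun q => u (Φ q)) p (1, deriv Z (Φ p)) = deriv u (Φ p) := by
  have hU : HasFDerivAt (fun q => u (Φ q)) (deriv u (Φ p) • fderiv ℝ Φ p) p :=
    hu.hasDerivAt.comp_hasFDerivAt p hΦ.hasFDerivAt
  rw [hU.fderiv, smul_apply, h.fderiv_apply_one_deriv hΦ hZ hψ, smul_eq_mul, mul_one]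

end IsShiftInverse

section TravelingWave

variable {E F : Type*} [NormedAddCommGroup E] [NormedSpace ℝ E]
  [NormedAddCommGroup F] [NormedSpace ℝ F]

theorem hasDerivAt_comp_sub_smul {U : E → F} {x v : E} {t : ℝ}
    (hU : DifferentiableAt ℝ U (x - t • v)) :
    HasDerivAt (fun s : ℝ => U (x - s • v)) (-fderiv ℝ U (x - t • v) v) t := by
  simpa [Function.comp_def] using
    hU.hasFDerivAt.comp_hasDerivAt t (((hasDerivAt_id t).smul_const v).const_sub x)

/-- With `a = f_∥'` and `F' = F_⊥'`, the conclusion is the balance law, expanded by the chain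
rule, for the traveling wave `(t, p) ↦ U (p - t • (σpar, σperp))`. -/
theorem deriv_comp_sub_smul_add_fderiv_eq_of_profile {U : ℝ × E → ℝ} (hU : Differentiable ℝ U)
    {a g : ℝ → ℝ} {F' : ℝ → E} {σpar : ℝ} {σperp : E}
    (hprofile : ∀ p, (a (U p) - σpar) * fderiv ℝ U p (1, 0)
      + fderiv ℝ U p (0, F' (U p) - σperp) = g (U p))
    (t : ℝ) (p : ℝ × E) :
    deriv (fun s : ℝ => U (p.1 - s * σpar, p.2 - s • σperp)) t
      + a (U (p.1 - t * σpar, p.2 - t • σperp))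
          * fderiv ℝ (fun q : ℝ × E => U (q.1 - t * σpar, q.2 - t • σperp)) p (1, 0)
      + fderiv ℝ (fun q : ℝ × E => U (q.1 - t * σpar, q.2 - t • σperp)) p
          (0, F' (U (p.1 - t * σpar, p.2 - t • σperp)))
      = g (U (p.1 - t * σpar, p.2 - t • σperp)) := by
  set σ : ℝ × E := (σpar, σperp)
  change deriv (fun s : ℝ => U (p - s • σ)) t + a (U (p - t • σ))
      * fderiv ℝ (fun q => U (q - t • σ)) p (1, 0)
      + fderiv ℝ (fun q => U (q - t • σ)) p (0, F' (U (p - t • σ))) = g (U (p - t • σ))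
  rw [(hasDerivAt_comp_sub_smul (hU _)).deriv, fderiv_comp_sub]
  set L := fderiv ℝ U (p - t • σ)
  have hσ : L σ = σpar * L (1, 0) + L (0, σperp) := by
    rw [← smul_eq_mul, ← map_smul, ← map_add]; simp [σ]
  have hF : L (0, F' (U (p - t • σ))) = L (0, F' (U (p - t • σ)) - σperp) + L (0, σperp) := by
    rw [← map_add]; simp
  rw [hσ, hF]
  linear_combination hprofile (p - t • σ)

end TravelingWave

theorem stmt_17_general (n : ℕ)
    (fpar g : ℝ → ℝ) (Fperp : ℝ → (Fin n → ℝ))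
    (σpar : ℝ) (σperp : Fin n → ℝ)
    (ub : ℝ → ℝ) (hub : ContDiff ℝ 1 ub)
    (hode : ∀ x, (deriv fpar (ub x) - σpar) * deriv ub x = g (ub x))
    (Z : ℝ → (Fin n → ℝ)) (hZ : ContDiff ℝ 1 Z)
    (hZode : ∀ x, (deriv fpar (ub x) - σpar) • deriv Z x = deriv Fperp (ub x) - σperp)
    (ψ0 : (Fin n → ℝ) → ℝ) (hψ0 : ContDiff ℝ 1 ψ0)
    (Φ : ℝ × (Fin n → ℝ) → ℝ) (hΦ : ContDiff ℝ 1 Φ)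
    (hinv : ∀ p : ℝ × (Fin n → ℝ), Φ p + ψ0 (p.2 - Z (Φ p)) = p.1) :
    (∀ p : ℝ × (Fin n → ℝ),
      (deriv fpar (ub (Φ p)) - σpar)
          * fderiv ℝ (fun q : ℝ × (Fin n → ℝ) => ub (Φ q)) p (1, 0)
        + fderiv ℝ (fun q : ℝ × (Fin n → ℝ) => ub (Φ q)) p
            (0, deriv Fperp (ub (Φ p)) - σperp)
        = g (ub (Φ p))) ∧
    (∀ (t : ℝ) (p : ℝ × (Fin n → ℝ)),
      deriv (fun s : ℝ => ub (Φ (p.1 - s * σpar, p.2 - s • σperp))) t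
        + deriv fpar (ub (Φ (p.1 - t * σpar, p.2 - t • σperp)))
            * fderiv ℝ (fun q : ℝ × (Fin n → ℝ) =>
                ub (Φ (q.1 - t * σpar, q.2 - t • σperp))) p (1, 0)
        + fderiv ℝ (fun q : ℝ × (Fin n → ℝ) =>
              ub (Φ (q.1 - t * σpar, q.2 - t • σperp))) p
            (0, deriv Fperp (ub (Φ (p.1 - t * σpar, p.2 - t • σperp))))
        = g (ub (Φ (p.1 - t * σpar, p.2 - t • σperp)))) := by
  have hubd := hub.differentiable one_ne_zero
  have hΦd := hΦ.differentiable one_ne_zero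
  have profile : ∀ p : ℝ × (Fin n → ℝ), (deriv fpar (ub (Φ p)) - σpar)
      * fderiv ℝ (fun q => ub (Φ q)) p (1, 0)
      + fderiv ℝ (fun q => ub (Φ q)) p (0, deriv Fperp (ub (Φ p)) - σperp) = g (ub (Φ p)) := by
    intro p
    have hdir := IsShiftInverse.fderiv_comp_apply_one_deriv hinv (hubd _) (hΦd p)
      ((hZ.differentiable one_ne_zero) _) ((hψ0.differentiable one_ne_zero) _)
    rw [show ((1 : ℝ), deriv Z (Φ p)) = (1, 0) + (0, deriv Z (Φ p)) by simp, map_add] at hdir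
    rw [← hZode, ← Prod.smul_zero_mk, map_smul, smul_eq_mul, ← hode, ← hdir]
    ring
  exact ⟨profile, deriv_comp_sub_smul_add_fderiv_eq_of_profile (fun p => (hubd _).comp p (hΦd p))
    profile⟩

/-- **Genuinely multidimensional traveling waves near a smooth planar wave**: if `ū` is
a one-dimensional profile of speed `σ_∥`, `Z` solves `(f_∥'(ū) − σ_∥) Z' = F_⊥'(ū) − σ_⊥`
and `Φ(·,y)` inverts `x ↦ x + ψ₀(y − Z(x))` for a `C¹` shift `ψ₀`, then
`U = ū ∘ Φ` satisfies the multidimensional profile equation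
`(f_∥'(U) − σ_∥) ∂_x U + (F_⊥'(U) − σ_⊥)·∇_y U = g(U)`; equivalently,
`(t,(x,y)) ↦ U(x − tσ_∥, y − tσ_⊥)` is a classical solution of
`∂_t u + div_𝐱(𝐅(u)) = g(u)` with flux `𝐅 = (f_∥, F_⊥)`. -/
theorem stmt_17 (d : ℕ) (hd : 2 ≤ d) (n : ℕ) (hn : d = n + 1)
    (fpar g : ℝ → ℝ) (Fperp : ℝ → (Fin n → ℝ))
    (hf : ContDiff ℝ 1 fpar) (hg : ContDiff ℝ 1 g) (hF : ContDiff ℝ 1 Fperp)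
    (σpar : ℝ) (σperp : Fin n → ℝ)
    (ub : ℝ → ℝ) (hub : ContDiff ℝ 1 ub)
    (hode : ∀ x, (deriv fpar (ub x) - σpar) * deriv ub x = g (ub x))
    (Z : ℝ → (Fin n → ℝ)) (hZ : ContDiff ℝ 1 Z)
    (hZode : ∀ x, (deriv fpar (ub x) - σpar) • deriv Z x = deriv Fperp (ub x) - σperp)
    (ψ0 : (Fin n → ℝ) → ℝ) (hψ0 : ContDiff ℝ 1 ψ0)
    (Φ : ℝ × (Fin n → ℝ) → ℝ) (hΦ : ContDiff ℝ 1 Φ)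
    (hinv : ∀ p : ℝ × (Fin n → ℝ), Φ p + ψ0 (p.2 - Z (Φ p)) = p.1) :
    (∀ p : ℝ × (Fin n → ℝ),
      (deriv fpar (ub (Φ p)) - σpar)
          * fderiv ℝ (fun q : ℝ × (Fin n → ℝ) => ub (Φ q)) p (1, 0)
        + fderiv ℝ (fun q : ℝ × (Fin n → ℝ) => ub (Φ q)) p
            (0, deriv Fperp (ub (Φ p)) - σperp)
        = g (ub (Φ p))) ∧
    (∀ (t : ℝ) (p : ℝ × (Fin n → ℝ)),
      deriv (fun s : ℝ => ub (Φ (p.1 - s * σpar, p.2 - s • σperp))) t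
        + deriv fpar (ub (Φ (p.1 - t * σpar, p.2 - t • σperp)))
            * fderiv ℝ (fun q : ℝ × (Fin n → ℝ) =>
                ub (Φ (q.1 - t * σpar, q.2 - t • σperp))) p (1, 0)
        + fderiv ℝ (fun q : ℝ × (Fin n → ℝ) =>
              ub (Φ (q.1 - t * σpar, q.2 - t • σperp))) p
            (0, deriv Fperp (ub (Φ (p.1 - t * σpar, p.2 - t • σperp))))
        = g (ub (Φ (p.1 - t * σpar, p.2 - t • σperp)))) :=
  stmt_17_general n fpar g Fperp σpar σperp ub hub hode Z hZ hZode ψ0 hψ0 Φ hΦ hinv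
end

section
/- Let d ≥ 2, let 𝐅 = (f_∥, F_⊥) : ℝ → ℝ×ℝ^{d−1} and g : ℝ → ℝ be continuous, and let u_- ≠ u_+ satisfy g(u_-) = g(u_+) = 0. Set σ_∥ := (f_∥(u_+) − f_∥(u_-))/(u_+ − u_-) and σ_⊥ := (F_⊥(u_+) − F_⊥(u_-))/(u_+ − u_-). Let ψ_0 : ℝ^{d−1} → ℝ be C^1. Define u(t,(x,y)) := u_- if x − t·σ_∥ < ψ_0(y − t·σ_⊥) and u(t,(x,y)) := u_+ if x − t·σ_∥ > ψ_0(y − t·σ_⊥). Then u is a weak solution of ∂_t u + div_𝐱(𝐅(u)) = g(u) on (0,∞)×ℝ^d: for every φ ∈ C_c^∞((0,∞)×ℝ^d), ∫_0^∞∫_{ℝ^d} (u·∂_t φ + 𝐅(u)·∇_𝐱 φ + g(u)·φ) d𝐱 dt = 0. -/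
open Filter Set Function MeasureTheory

/-!
Since `g` vanishes at both states, the source term drops out, and with
`V w = (w, f_∥ w, F_⊥ w)` the integrand is `Dφ(q) (V (u q))`. As `u` takes only the two values
`u_±`, the Rankine–Hugoniot relations say `V (u q) = V u_+ + (u_- - u_+) 1_Ω(q) e`, where
`e = (1, σ_∥, σ_⊥)` is the slope of `V` between the two states and `Ω = {u = u_-}`. The integral of
`Dφ · V u_+` vanishes. The region `Ω` is invariant under translation along `e`, so its indicator
has zero derivative in direction `e`, and integration by parts along `e` gives `∫_Ω Dφ · e = 0`.
-/

section PartialDerivatives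

variable {F G : Type*} [NormedAddCommGroup F] [NormedSpace ℝ F]
  [NormedAddCommGroup G] [NormedSpace ℝ G]

theorem smul_deriv_add_fderiv_eq_fderiv_uncurry {φ : ℝ → F → G} {t : ℝ} {p : F}
    (h : DifferentiableAt ℝ (uncurry φ) (t, p)) (a : ℝ) (w : F) :
    a • deriv (fun s => φ s p) t + fderiv ℝ (φ t) p w = fderiv ℝ (uncurry φ) (t, p) (a, w) := by
  have ht : HasFDerivAt (fun s => φ s p)
      ((fderiv ℝ (uncurry φ) (t, p)).comp (.inl ℝ ℝ F)) t :=
    h.hasFDerivAt.comp (f := fun s => (s, p)) t (hasFDerivAt_prodMk_left t p)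
  have hp : HasFDerivAt (φ t) ((fderiv ℝ (uncurry φ) (t, p)).comp (.inr ℝ ℝ F)) p :=
    h.hasFDerivAt.comp (f := fun q => (t, q)) p (hasFDerivAt_prodMk_right t p)
  rw [← fderiv_apply_one_eq_deriv, ht.fderiv, hp.fderiv, ← map_smul]
  simp only [ContinuousLinearMap.comp_apply, ← map_add]
  simp

end PartialDerivatives

section InvariantDomain

variable {E : Type*} [NormedAddCommGroup E] [NormedSpace ℝ E] {Φ : E → ℝ} {Ω : Set E} {e : E}

theorem hasLineDerivAt_indicator_of_add_smul_mem_iff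
    (hΩ : ∀ x (s : ℝ), x + s • e ∈ Ω ↔ x ∈ Ω) (x : E) :
    HasLineDerivAt ℝ (Ω.indicator (1 : E → ℝ)) 0 x e := by
  have hconst : (fun s : ℝ => Ω.indicator (1 : E → ℝ) (x + s • e)) =
      fun _ => Ω.indicator 1 x := by
    ext s
    by_cases hx : x ∈ Ω
    · rw [indicator_of_mem hx, indicator_of_mem ((hΩ x s).2 hx), Pi.one_apply, Pi.one_apply]
    · rw [indicator_of_notMem hx, indicator_of_notMem (mt (hΩ x s).1 hx)]
  unfold HasLineDerivAt
  rw [hconst]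
  exact hasDerivAt_const _ _

theorem integrable_fderiv_apply [MeasurableSpace E] [OpensMeasurableSpace E] (μ : Measure E)
    [IsFiniteMeasureOnCompacts μ] (hΦ : ContDiff ℝ 1 Φ) (hc : HasCompactSupport Φ) (v : E) :
    Integrable (fun x => fderiv ℝ Φ x v) μ :=
  (hΦ.continuous_fderiv_apply one_ne_zero).comp (continuous_id.prodMk continuous_const)
    |>.integrable_of_hasCompactSupport (hc.fderiv_apply ℝ v)

variable [MeasurableSpace E] [BorelSpace E] [FiniteDimensional ℝ E] (μ : Measure E)
  [μ.IsAddHaarMeasure]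

theorem integral_fderiv_apply_eq_zero_of_add_smul_mem_iff (hΦ : ContDiff ℝ 1 Φ)
    (hc : HasCompactSupport Φ) (hΩm : MeasurableSet Ω)
    (hΩ : ∀ x (s : ℝ), x + s • e ∈ Ω ↔ x ∈ Ω) :
    ∫ x in Ω, fderiv ℝ Φ x e ∂μ = 0 := by
  have hΦi : Integrable Φ μ := hΦ.continuous.integrable_of_hasCompactSupport hc
  have hmul : ∀ f : E → ℝ, (fun x => Ω.indicator 1 x * f x) = Ω.indicator f := by
    intro f
    ext x
    by_cases hx : x ∈ Ω <;> simp [hx]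
  have hIBP := integral_bilinear_hasLineDerivAt_right_eq_neg_left_of_integrable
    (μ := μ) (B := ContinuousLinearMap.mul ℝ ℝ) (f := Ω.indicator 1) (f' := 0)
    (g := Φ) (g' := fun x => fderiv ℝ Φ x e) (by simp)
    (by simpa [hmul] using (integrable_fderiv_apply μ hΦ hc e).indicator hΩm)
    (by simpa [hmul] using hΦi.indicator hΩm)
    (fun x _ => hasLineDerivAt_indicator_of_add_smul_mem_iff hΩ x)
    (fun x _ => ((hΦ.differentiable one_ne_zero x).hasFDerivAt.hasLineDerivAt e))
  simpa [hmul, integral_indicator hΩm] using hIBP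

theorem integral_fderiv_apply_add_mul_indicator_eq_zero (hΦ : ContDiff ℝ 1 Φ)
    (hc : HasCompactSupport Φ) (hΩm : MeasurableSet Ω)
    (hΩ : ∀ x (s : ℝ), x + s • e ∈ Ω ↔ x ∈ Ω) (v : E) (c : ℝ) :
    ∫ x, (fderiv ℝ Φ x v + c * Ω.indicator (fun x => fderiv ℝ Φ x e) x) ∂μ = 0 := by
  have hv := integral_fderiv_apply_eq_zero_of_add_smul_mem_iff μ hΦ hc MeasurableSet.univ
    (e := v) (fun _ _ => Iff.rfl)
  rw [setIntegral_univ] at hv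
  rw [integral_add (integrable_fderiv_apply μ hΦ hc v)
      (((integrable_fderiv_apply μ hΦ hc e).indicator hΩm).const_mul c),
    integral_const_mul, integral_indicator hΩm, hv,
    integral_fderiv_apply_eq_zero_of_add_smul_mem_iff μ hΦ hc hΩm hΩ, mul_zero, add_zero]

end InvariantDomain

section TravelingSet

variable {E : Type*} [AddCommGroup E] [Module ℝ E]

def travelingSet (σ : E) (S : Set E) : Set (ℝ × E) := {q | q.2 - q.1 • σ ∈ S}

theorem add_smul_mem_travelingSet_iff {σ : E} {S : Set E} (q : ℝ × E) (s : ℝ) :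
    q + s • (1, σ) ∈ travelingSet σ S ↔ q ∈ travelingSet σ S := by
  obtain ⟨t, x⟩ := q
  simp only [travelingSet, mem_ofPred_eq, Prod.mk_add_mk, Prod.smul_mk, smul_eq_mul, mul_one]
  rw [show x + s • σ - (t + s) • σ = x - t • σ by module]

theorem IsOpen.travelingSet [TopologicalSpace E] [IsTopologicalAddGroup E] [ContinuousSMul ℝ E]
    {S : Set E} (hS : IsOpen S) (σ : E) : IsOpen (travelingSet σ S) :=
  hS.preimage (by fun_prop)

end TravelingSet

theorem eq_add_sub_smul_slope {M : Type*} [AddCommGroup M] [Module ℝ M] (f : ℝ → M) (a b : ℝ) :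
    f a = f b + (a - b) • slope f b a := by
  rw [← sub_smul_slope_vadd f b a, vadd_eq_add, add_comm]

theorem stmt_18_general (n : ℕ)
    (fpar : ℝ → ℝ) (Fperp : ℝ → (Fin n → ℝ)) (g : ℝ → ℝ)
    (um up : ℝ) (hne : um ≠ up)
    (hgum : g um = 0) (hgup : g up = 0)
    (σpar : ℝ) (hσpar : σpar = (fpar up - fpar um) / (up - um))
    (σperp : Fin n → ℝ) (hσperp : σperp = (up - um)⁻¹ • (Fperp up - Fperp um))
    (ψ0 : (Fin n → ℝ) → ℝ) (hψ0 : ContDiff ℝ 1 ψ0)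
    (u : ℝ → ℝ × (Fin n → ℝ) → ℝ)
    (hu : u = fun t p =>
      if p.1 - t * σpar < ψ0 (p.2 - t • σperp) then um else up) :
    ∀ φ : ℝ → ℝ × (Fin n → ℝ) → ℝ,
      ContDiff ℝ (⊤ : ℕ∞) (uncurry φ) →
      HasCompactSupport (uncurry φ) →
      tsupport (uncurry φ) ⊆ Ioi (0:ℝ) ×ˢ (univ : Set (ℝ × (Fin n → ℝ))) →
      (∫ q : ℝ × (ℝ × (Fin n → ℝ)),
        (u q.1 q.2 * deriv (fun s => φ s q.2) q.1
          + fderiv ℝ (fun p => φ q.1 p) q.2 (fpar (u q.1 q.2), Fperp (u q.1 q.2))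
          + g (u q.1 q.2) * φ q.1 q.2)) = 0 := by
  intro φ hφ hφc _
  have hΦ : ContDiff ℝ 1 (uncurry φ) := hφ.of_le (by exact_mod_cast le_top)
  set V : ℝ → ℝ × ℝ × (Fin n → ℝ) := fun w => (w, fpar w, Fperp w)
  set σ : ℝ × (Fin n → ℝ) := (σpar, σperp)
  set Ω := travelingSet σ {p | p.1 < ψ0 p.2}
  have hΩm : MeasurableSet Ω :=
    ((isOpen_lt continuous_fst (hψ0.continuous.comp continuous_snd)).travelingSet σ).measurableSet
  have hslope : slope V up um = (1, σ) := by
    rw [slope_comm]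
    simp only [V, σ, slope_def_module, Prod.mk_sub_mk, Prod.smul_mk, smul_eq_mul,
      inv_mul_cancel₀ (sub_ne_zero.2 hne.symm), hσpar, hσperp, div_eq_inv_mul]
  have hu_mem : ∀ t p, (t, p) ∈ Ω → u t p = um := fun t p h => by rw [hu]; exact if_pos h
  have hu_notMem : ∀ t p, (t, p) ∉ Ω → u t p = up := fun t p h => by rw [hu]; exact if_neg h
  have hpoint : ∀ q : ℝ × ℝ × (Fin n → ℝ),
      u q.1 q.2 * deriv (fun s => φ s q.2) q.1
          + fderiv ℝ (fun p => φ q.1 p) q.2 (fpar (u q.1 q.2), Fperp (u q.1 q.2))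
          + g (u q.1 q.2) * φ q.1 q.2
        = fderiv ℝ (uncurry φ) q (V up)
          + (um - up) * Ω.indicator (fun q => fderiv ℝ (uncurry φ) q (1, σ)) q := by
    rintro ⟨t, p⟩
    rw [← smul_eq_mul (u t p),
      smul_deriv_add_fderiv_eq_fderiv_uncurry (hΦ.differentiable one_ne_zero _)]
    by_cases hq : (t, p) ∈ Ω
    · rw [hu_mem t p hq, indicator_of_mem hq, hgum, zero_mul, add_zero]
      change fderiv ℝ (uncurry φ) (t, p) (V um) = _
      rw [eq_add_sub_smul_slope V um up, hslope, map_add, map_smul, smul_eq_mul]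
    · rw [hu_notMem t p hq, indicator_of_notMem hq, hgup]
      simp [V]
  have : (volume : Measure (ℝ × (Fin n → ℝ))).IsAddHaarMeasure :=
    Measure.prod.instIsAddHaarMeasure _ _
  have : (volume : Measure (ℝ × ℝ × (Fin n → ℝ))).IsAddHaarMeasure :=
    Measure.prod.instIsAddHaarMeasure _ _
  simp only [hpoint]
  exact integral_fderiv_apply_add_mul_indicator_eq_zero _ hΦ hφc hΩm
    add_smul_mem_travelingSet_iff _ _

/-- **Multidimensional shock-type traveling waves with arbitrarily curved discontinuity
hypersurface**: given zeros `u_- ≠ u_+` of `g`, with longitudinal and transverse speeds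
given by the Rankine–Hugoniot ratios, and any `C¹` function `ψ₀`, the two-state function
jumping across `{x = σ_∥ t + ψ₀(y − σ_⊥ t)}` is a weak solution of
`∂_t u + div_𝐱(𝐅(u)) = g(u)` on `(0,∞) × ℝ^d` with flux `𝐅 = (f_∥, F_⊥)`. -/
theorem stmt_18 (d : ℕ) (hd : 2 ≤ d) (n : ℕ) (hn : d = n + 1)
    (fpar : ℝ → ℝ) (Fperp : ℝ → (Fin n → ℝ)) (g : ℝ → ℝ)
    (hf : Continuous fpar) (hF : Continuous Fperp) (hg : Continuous g)
    (um up : ℝ) (hne : um ≠ up)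
    (hgum : g um = 0) (hgup : g up = 0)
    (σpar : ℝ) (hσpar : σpar = (fpar up - fpar um) / (up - um))
    (σperp : Fin n → ℝ) (hσperp : σperp = (up - um)⁻¹ • (Fperp up - Fperp um))
    (ψ0 : (Fin n → ℝ) → ℝ) (hψ0 : ContDiff ℝ 1 ψ0)
    (u : ℝ → ℝ × (Fin n → ℝ) → ℝ)
    (hu : u = fun t p =>
      if p.1 - t * σpar < ψ0 (p.2 - t • σperp) then um else up) :
    ∀ φ : ℝ → ℝ × (Fin n → ℝ) → ℝ,
      ContDiff ℝ (⊤ : ℕ∞) (uncurry φ) →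
      HasCompactSupport (uncurry φ) →
      tsupport (uncurry φ) ⊆ Ioi (0:ℝ) ×ˢ (univ : Set (ℝ × (Fin n → ℝ))) →
      (∫ q : ℝ × (ℝ × (Fin n → ℝ)),
        (u q.1 q.2 * deriv (fun s => φ s q.2) q.1
          + fderiv ℝ (fun p => φ q.1 p) q.2 (fpar (u q.1 q.2), Fperp (u q.1 q.2))
          + g (u q.1 q.2) * φ q.1 q.2)) = 0 :=
  stmt_18_general n fpar Fperp g um up hne hgum hgup σpar hσpar σperp hσperp ψ0 hψ0 u hu
end

section
/- Let d ≥ 2, let f_∥, g : ℝ → ℝ and F_⊥ : ℝ → ℝ^{d−1} be C^1, let σ = (σ_∥, σ_⊥) ∈ ℝ×ℝ^{d−1}, and let T > 0. Let v : [0,T]×ℝ×ℝ^{d−1} → ℝ and Y : [0,T]×ℝ×ℝ^{d−1} → ℝ^{d−1} be C^1 with ∂_t v + (f_∥'(v) − σ_∥)·∂_x v = g(v) and ∂_t Y + (f_∥'(v) − σ_∥)·∂_x Y = F_⊥'(v) − σ_⊥ pointwise. Let u : [0,T]×ℝ^d → ℝ be C^1 and suppose u(t, x + t·σ_∥, Y(t,x,y)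 + t·σ_⊥) = v(t,x,y) for all (t,x,y). Then at every point of the form (t, x + t·σ_∥, Y(t,x,y) + t·σ_⊥), u satisfies ∂_t u + f_∥'(u)·∂_{x_1} u + F_⊥'(u)·∇_{x_⊥} u = g(u), i.e. u is a classical solution of the multidimensional balance law ∂_t u + div_𝐱(𝐅(u)) = g(u) with flux 𝐅 = (f_∥, F_⊥) at all such points. -/
/-!
Write `Φ(t, x, y) = (t, x + tσ_∥, Y(t, x, y) + tσ_⊥)`, so that `v = u ∘ Φ`. The chain rule gives
`∂_t v = ∂_t u + Du·(σ_∥, ∂_t Y + σ_⊥)` and `∂_x v = Du·(1, ∂_x Y)`, hence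
`∂_t v + (a − σ_∥) ∂_x v = ∂_t u + Du·(a, ∂_t Y + (a − σ_∥) ∂_x Y + σ_⊥)` with `a = f_∥'(v)`.
By the transverse-position equation the second slot is `F_⊥'(v)`, and by the shape equation the
left-hand side is `g(v)`.
-/

open Set Function

section UncurryCalculus

variable {E G : Type*} [NormedAddCommGroup E] [NormedSpace ℝ E]
  [NormedAddCommGroup G] [NormedSpace ℝ G]
  {u : ℝ → E → G} {s : Set ℝ} {t : ℝ} {p : E}

theorem DifferentiableWithinAt.of_uncurry_left
    (hu : DifferentiableWithinAt ℝ (uncurry u) (s ×ˢ univ) (t, p)) :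
    DifferentiableWithinAt ℝ (fun τ => u τ p) s t :=
  hu.comp t (differentiableWithinAt_id.prodMk (differentiableWithinAt_const p))
    fun _ hτ => mk_mem_prod hτ (mem_univ p)

theorem DifferentiableWithinAt.of_uncurry_right
    (hu : DifferentiableWithinAt ℝ (uncurry u) (s ×ˢ univ) (t, p)) (ht : t ∈ s) :
    DifferentiableAt ℝ (u t) p := by
  rw [← differentiableWithinAt_univ]
  exact hu.comp p ((differentiableWithinAt_const t).prodMk differentiableWithinAt_id)
    fun _ _ => ⟨ht, mem_univ _⟩

theorem DifferentiableWithinAt.hasDerivWithinAt_uncurry_comp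
    (hu : DifferentiableWithinAt ℝ (uncurry u) (s ×ˢ univ) (t, p)) (ht : t ∈ s)
    (hs : UniqueDiffWithinAt ℝ s t) {γ : ℝ → E} {γ' : E}
    (hγ : HasDerivWithinAt γ γ' s t) (hγt : γ t = p) :
    HasDerivWithinAt (fun τ => u τ (γ τ))
      (derivWithin (fun τ => u τ p) s t + fderiv ℝ (u t) p γ') s t := by
  set L := fderivWithin ℝ (uncurry u) (s ×ˢ univ) (t, p)
  have hL : HasFDerivWithinAt (uncurry u) L (s ×ˢ univ) (t, p) := hu.hasFDerivWithinAt
  have hgraph : ∀ {c : ℝ → E} {c' : E}, c t = p → HasDerivWithinAt c c' s t →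
      HasDerivWithinAt (fun τ => u τ (c τ)) (L (1, c')) s t := by
    intro c c' hct hc
    have hc' : HasDerivWithinAt (fun τ => (τ, c τ)) (1, c') s t :=
      (hasDerivWithinAt_id t s).prodMk hc
    exact hL.comp_hasDerivWithinAt_of_eq t hc' (fun _ hτ => ⟨hτ, mem_univ _⟩) (by rw [hct])
  have htime : derivWithin (fun τ => u τ p) s t = L (1, 0) :=
    (hgraph rfl (hasDerivWithinAt_const t s p)).derivWithin hs
  have hspace : fderiv ℝ (u t) p γ' = L (0, γ') := by
    have hι : HasFDerivAt (fun q : E => (t, q)) ((0 : E →L[ℝ] ℝ).prod (.id ℝ E)) p :=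
      (hasFDerivAt_const t p).prodMk (hasFDerivAt_id p)
    have hut : HasFDerivAt (u t) (L.comp ((0 : E →L[ℝ] ℝ).prod (.id ℝ E))) p :=
      hasFDerivWithinAt_univ.mp (hL.comp p hι.hasFDerivWithinAt fun _ _ => ⟨ht, mem_univ _⟩)
    simp [hut.fderiv]
  rw [htime, hspace, ← map_add, Prod.mk_add_mk, add_zero, zero_add]
  exact hgraph hγt hγ

end UncurryCalculus

theorem ContinuousLinearMap.apply_prod_add_smul_apply_prod {F G : Type*}
    [NormedAddCommGroup F] [NormedSpace ℝ F] [NormedAddCommGroup G] [NormedSpace ℝ G]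
    (D : ℝ × F →L[ℝ] G) (a σ : ℝ) (w₁ w₂ c : F) :
    D (σ, w₁ + c) + (a - σ) • D (1, w₂) = a • D (1, 0) + D (0, w₁ + (a - σ) • w₂ + c) := by
  simp only [← map_smul, ← map_add]
  congr 1
  ext
  · simp
  · simp only [Prod.snd_add, Prod.smul_snd, smul_zero, zero_add]
    abel

theorem stmt_19_general (n : ℕ)
    (fpar g : ℝ → ℝ) (Fperp : ℝ → (Fin n → ℝ))
    (σpar : ℝ) (σperp : Fin n → ℝ) (T : ℝ) (hT : 0 < T)
    (v : ℝ → ℝ → (Fin n → ℝ) → ℝ) (Y : ℝ → ℝ → (Fin n → ℝ) → (Fin n → ℝ))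
    (hYC1 : ContDiffOn ℝ 1 (fun q : ℝ × ℝ × (Fin n → ℝ) => Y q.1 q.2.1 q.2.2)
      (Icc (0:ℝ) T ×ˢ (univ : Set (ℝ × (Fin n → ℝ)))))
    (hvpde : ∀ t ∈ Icc (0:ℝ) T, ∀ (x : ℝ) (y : Fin n → ℝ),
      derivWithin (fun s => v s x y) (Icc (0:ℝ) T) t
        + (deriv fpar (v t x y) - σpar) * deriv (fun z => v t z y) x
        = g (v t x y))
    (hYpde : ∀ t ∈ Icc (0:ℝ) T, ∀ (x : ℝ) (y : Fin n → ℝ),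
      derivWithin (fun s => Y s x y) (Icc (0:ℝ) T) t
        + (deriv fpar (v t x y) - σpar) • deriv (fun z => Y t z y) x
        = deriv Fperp (v t x y) - σperp)
    (u : ℝ → ℝ × (Fin n → ℝ) → ℝ)
    (huC1 : ContDiffOn ℝ 1 (fun q : ℝ × ℝ × (Fin n → ℝ) => u q.1 q.2)
      (Icc (0:ℝ) T ×ˢ (univ : Set (ℝ × (Fin n → ℝ)))))
    (hcomp : ∀ t ∈ Icc (0:ℝ) T, ∀ (x : ℝ) (y : Fin n → ℝ),
      u t (x + t * σpar, Y t x y + t • σperp) = v t x y) :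
    ∀ t ∈ Icc (0:ℝ) T, ∀ (x : ℝ) (y : Fin n → ℝ),
      derivWithin (fun s => u s (x + t * σpar, Y t x y + t • σperp)) (Icc (0:ℝ) T) t
        + deriv fpar (u t (x + t * σpar, Y t x y + t • σperp))
            * fderiv ℝ (u t) (x + t * σpar, Y t x y + t • σperp) (1, 0)
        + fderiv ℝ (u t) (x + t * σpar, Y t x y + t • σperp)
            (0, deriv Fperp (u t (x + t * σpar, Y t x y + t • σperp)))
        = g (u t (x + t * σpar, Y t x y + t • σperp)) := by
  intro t ht x y
  have hI : UniqueDiffWithinAt ℝ (Icc 0 T) t := uniqueDiffOn_Icc hT t ht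
  set P := (x + t * σpar, Y t x y + t • σperp)
  set D := fderiv ℝ (u t) P
  set Yt := derivWithin (fun s => Y s x y) (Icc 0 T) t
  set Yx := deriv (fun z => Y t z y) x
  have hu := huC1.differentiableOn one_ne_zero (t, P) ⟨ht, trivial⟩
  have hY := hYC1.differentiableOn one_ne_zero (t, x, y) ⟨ht, trivial⟩
  have hYt : HasDerivWithinAt (fun s => Y s x y) Yt (Icc 0 T) t :=
    (DifferentiableWithinAt.of_uncurry_left (u := fun τ (q : ℝ × _) => Y τ q.1 q.2) hY).hasDerivWithinAt
  have hYx : HasDerivAt (fun z => Y t z y) Yx x :=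
    ((DifferentiableWithinAt.of_uncurry_right (u := fun τ (q : ℝ × _) => Y τ q.1 q.2) hY ht).comp
      (f := fun z => (z, y)) x (differentiableAt_id.prodMk (differentiableAt_const y))).hasDerivAt
  have hvt : derivWithin (fun s => v s x y) (Icc 0 T) t
      = derivWithin (fun s => u s P) (Icc 0 T) t + D (σpar, Yt + σperp) := by
    have hγ : HasDerivWithinAt (fun s => (x + s * σpar, Y s x y + s • σperp))
        (σpar, Yt + σperp) (Icc 0 T) t := by
      refine HasDerivWithinAt.prodMk ?_ (hYt.add ?_)
      · simpa using ((hasDerivWithinAt_id t _).mul_const σpar).const_add x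
      · simpa using (hasDerivWithinAt_id t _).smul_const σperp
    rw [← (hu.hasDerivWithinAt_uncurry_comp ht hI hγ rfl).derivWithin hI]
    exact derivWithin_congr (fun s hs => (hcomp s hs x y).symm) (hcomp t ht x y).symm
  have hvx : deriv (fun z => v t z y) x = D (1, Yx) := by
    have hη : HasDerivAt (fun z => (z + t * σpar, Y t z y + t • σperp)) (1, Yx) x :=
      ((hasDerivAt_id x).add_const _).prodMk (hYx.add_const _)
    rw [← funext fun z => hcomp t ht z y]
    exact ((hu.of_uncurry_right ht).hasFDerivAt.comp_hasDerivAt x hη).deriv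
  have hF : deriv Fperp (v t x y) = Yt + (deriv fpar (v t x y) - σpar) • Yx + σperp :=
    sub_eq_iff_eq_add.mp (hYpde t ht x y).symm
  have key := D.apply_prod_add_smul_apply_prod (deriv fpar (v t x y)) σpar Yt Yx σperp
  simp only [smul_eq_mul] at key
  rw [hcomp t ht x y, hF, ← hvpde t ht x y, hvt, hvx]
  linear_combination -key

/-- **Reconstruction of multidimensional solutions from the shape and transverse-position
equations**: if `v` solves the one-dimensional shape equation
`∂_t v + (f_∥'(v) − σ_∥) ∂_x v = g(v)`, `Y` solves the affine transverse-position system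
`∂_t Y + (f_∥'(v) − σ_∥) ∂_x Y = F_⊥'(v) − σ_⊥`, and the `C¹` function `u` satisfies
`u(t, x + tσ_∥, Y(t,x,y) + tσ_⊥) = v(t,x,y)`, then `u` is a classical solution of the
multidimensional balance law `∂_t u + f_∥'(u) ∂_{x₁} u + F_⊥'(u)·∇_{x_⊥} u = g(u)` at
every point of the form `(t, x + tσ_∥, Y(t,x,y) + tσ_⊥)` with `t ∈ [0,T]`. -/
theorem stmt_19 (d : ℕ) (hd : 2 ≤ d) (n : ℕ) (hn : d = n + 1)
    (fpar g : ℝ → ℝ) (Fperp : ℝ → (Fin n → ℝ))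
    (hf : ContDiff ℝ 1 fpar) (hg : ContDiff ℝ 1 g) (hF : ContDiff ℝ 1 Fperp)
    (σpar : ℝ) (σperp : Fin n → ℝ) (T : ℝ) (hT : 0 < T)
    (v : ℝ → ℝ → (Fin n → ℝ) → ℝ) (Y : ℝ → ℝ → (Fin n → ℝ) → (Fin n → ℝ))
    (hvC1 : ContDiffOn ℝ 1 (fun q : ℝ × ℝ × (Fin n → ℝ) => v q.1 q.2.1 q.2.2)
      (Icc (0:ℝ) T ×ˢ (univ : Set (ℝ × (Fin n → ℝ)))))
    (hYC1 : ContDiffOn ℝ 1 (fun q : ℝ × ℝ × (Fin n → ℝ) => Y q.1 q.2.1 q.2.2)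
      (Icc (0:ℝ) T ×ˢ (univ : Set (ℝ × (Fin n → ℝ)))))
    (hvpde : ∀ t ∈ Icc (0:ℝ) T, ∀ (x : ℝ) (y : Fin n → ℝ),
      derivWithin (fun s => v s x y) (Icc (0:ℝ) T) t
        + (deriv fpar (v t x y) - σpar) * deriv (fun z => v t z y) x
        = g (v t x y))
    (hYpde : ∀ t ∈ Icc (0:ℝ) T, ∀ (x : ℝ) (y : Fin n → ℝ),
      derivWithin (fun s => Y s x y) (Icc (0:ℝ) T) t
        + (deriv fpar (v t x y) - σpar) • deriv (fun z => Y t z y) x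
        = deriv Fperp (v t x y) - σperp)
    (u : ℝ → ℝ × (Fin n → ℝ) → ℝ)
    (huC1 : ContDiffOn ℝ 1 (fun q : ℝ × ℝ × (Fin n → ℝ) => u q.1 q.2)
      (Icc (0:ℝ) T ×ˢ (univ : Set (ℝ × (Fin n → ℝ)))))
    (hcomp : ∀ t ∈ Icc (0:ℝ) T, ∀ (x : ℝ) (y : Fin n → ℝ),
      u t (x + t * σpar, Y t x y + t • σperp) = v t x y) :
    ∀ t ∈ Icc (0:ℝ) T, ∀ (x : ℝ) (y : Fin n → ℝ),
      derivWithin (fun s => u s (x + t * σpar, Y t x y + t • σperp)) (Icc (0:ℝ) T) t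
        + deriv fpar (u t (x + t * σpar, Y t x y + t • σperp))
            * fderiv ℝ (u t) (x + t * σpar, Y t x y + t • σperp) (1, 0)
        + fderiv ℝ (u t) (x + t * σpar, Y t x y + t • σperp)
            (0, deriv Fperp (u t (x + t * σpar, Y t x y + t • σperp)))
        = g (u t (x + t * σpar, Y t x y + t • σperp)) :=
  stmt_19_general n fpar g Fperp σpar σperp T hT v Y hYC1 hvpde hYpde u huC1 hcomp
end
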